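/- arXiv:1304.1191 — 8 statements merged into one kernel-verified Lean document; each statement's English description precedes it below -/
import Mathlib

section
/- Let 0 < α < 1 and let Q be a multiplier of the weighted Dirichlet space D_α, i.e. an analytic function on the open unit disk 𝔻 such that multiplication by Q is a bounded operator on D_α with operator norm ‖M_Q‖. Then (1 − |z|²)·|Q'(z)| ≤ ‖M_Q‖ for all z ∈ 𝔻. -/
open MeasureTheory Real

/-- The `n`-th Taylor coefficient of `f` at `0`. -/
noncomputable def taylorCoeff (f : ℂ → ℂ) (n : ℕ) : ℂ :=
  iteratedDeriv n f 0 / (n.factorial : ℂ)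

/-- The squared norm of `f` in the weighted Dirichlet space `D_α`:
`‖f‖² = Σ_n (n+1)^α |a_n|²` where `a_n` are the Taylor coefficients of `f` at `0`. -/
noncomputable def dirNormSq (α : ℝ) (f : ℂ → ℂ) : ℝ :=
  ∑' n : ℕ, ((n : ℝ) + 1) ^ α * ‖taylorCoeff f n‖ ^ 2

/-- Membership in the weighted Dirichlet space `D_α`: `f` is analytic on the open
unit disk and `Σ_n (n+1)^α |a_n|² < ∞`. -/
def MemDirichlet (α : ℝ) (f : ℂ → ℂ) : Prop :=
  DifferentiableOn ℂ f (Metric.ball (0:ℂ) 1) ∧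
    Summable fun n : ℕ => ((n : ℝ) + 1) ^ α * ‖taylorCoeff f n‖ ^ 2

/-- `φ` is a multiplier of `D_α`: `φ` is analytic on the open unit disk and
`φ f ∈ D_α` for every `f ∈ D_α`. -/
def IsMultiplier (α : ℝ) (φ : ℂ → ℂ) : Prop :=
  DifferentiableOn ℂ φ (Metric.ball (0:ℂ) 1) ∧
    ∀ f : ℂ → ℂ, MemDirichlet α f → MemDirichlet α fun z => φ z * f z

/-!
Two classical facts combine. First, a multiplier is bounded by its multiplier norm: the Taylor
coefficients of `f ∈ D_α` are bounded by `‖f‖`, so `|f(z)| ≤ ‖f‖ / (1 - |z|)`; applied to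
`f = Qⁿ`, with `‖Qⁿ‖ ≤ Kⁿ`, this gives `|Q(z)|ⁿ ≤ Kⁿ / (1 - |z|)` for all `n`, hence `|Q(z)| ≤ K`.
Second, a holomorphic `f` with `|f| ≤ K` on the disk satisfies the Schwarz–Pick type estimate
`(1 - |z|²)|f'(z)| ≤ K`: compose `f` with the disk automorphism sending `0` to `z`, whose
derivative at `0` is `1 - |z|²`, and apply Cauchy's estimate at `0`.
-/

open Metric Filter ComplexConjugate

theorem le_of_forall_pow_le_mul_pow {a b C : ℝ} (hb : 0 ≤ b) (h : ∀ n : ℕ, a ^ n ≤ C * b ^ n) :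
    a ≤ b := by
  by_contra! hba
  obtain rfl | hb := hb.eq_or_lt
  · have h1 := h 1
    simp only [pow_one, mul_zero] at h1
    linarith
  obtain ⟨n, hn⟩ := pow_unbounded_of_one_lt C ((one_lt_div hb).2 hba)
  rw [div_pow, lt_div_iff₀ (pow_pos hb n)] at hn
  exact (h n).not_gt hn

theorem norm_deriv_le_div_of_forall_norm_le {E : Type*} [NormedAddCommGroup E] [NormedSpace ℂ E]
    {f : ℂ → E} {c : ℂ} {R K : ℝ} (hR : 0 < R) (hf : DifferentiableOn ℂ f (ball c R))
    (hK : ∀ w ∈ ball c R, ‖f w‖ ≤ K) : ‖deriv f c‖ ≤ K / R := by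
  rw [le_div_iff₀ hR]
  have hcauchy : ∀ r ∈ Set.Ioo 0 R, ‖deriv f c‖ * r ≤ K := fun r hr ↦ by
    rw [← le_div_iff₀ hr.1]
    refine Complex.norm_deriv_le_of_forall_mem_sphere_norm_le hr.1
      (hf.diffContOnCl_ball (closedBall_subset_ball hr.2)) fun w hw ↦ hK w ?_
    exact sphere_subset_closedBall.trans (closedBall_subset_ball hr.2) hw
  exact le_of_tendsto (tendsto_nhdsWithin_of_tendsto_nhds (continuous_const_mul _).continuousAt)
    (eventually_of_mem (Ioo_mem_nhdsLT hR) hcauchy)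

noncomputable def mobius (a w : ℂ) : ℂ := (w + a) / (1 + conj a * w)

section Mobius

variable {a w : ℂ}

theorem mobius_zero (a : ℂ) : mobius a 0 = a := by simp [mobius]

theorem one_add_conj_mul_ne_zero (ha : ‖a‖ < 1) (hw : ‖w‖ < 1) : 1 + conj a * w ≠ 0 := by
  intro h
  have hlt : ‖conj a * w‖ < 1 := by
    rw [norm_mul, Complex.norm_conj]
    nlinarith [norm_nonneg a, norm_nonneg w]
  rw [eq_neg_of_add_eq_zero_right h, norm_neg, norm_one] at hlt
  exact lt_irrefl _ hlt

theorem normSq_one_add_conj_mul_sub_normSq_add (a w : ℂ) :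
    Complex.normSq (1 + conj a * w) - Complex.normSq (w + a) =
      (1 - Complex.normSq a) * (1 - Complex.normSq w) := by
  apply Complex.ofReal_injective
  push_cast
  simp only [← Complex.mul_conj, map_add, map_mul, map_one, Complex.conj_conj]
  ring

theorem norm_mobius_lt_one (ha : ‖a‖ < 1) (hw : ‖w‖ < 1) : ‖mobius a w‖ < 1 := by
  have hden := one_add_conj_mul_ne_zero ha hw
  rw [mobius, norm_div, div_lt_one (norm_pos_iff.2 hden), ← sq_lt_sq₀ (norm_nonneg _)
    (norm_nonneg _), ← Complex.normSq_eq_norm_sq, ← Complex.normSq_eq_norm_sq, ← sub_pos,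
    normSq_one_add_conj_mul_sub_normSq_add, Complex.normSq_eq_norm_sq, Complex.normSq_eq_norm_sq]
  have ha2 : ‖a‖ ^ 2 < 1 := by nlinarith [norm_nonneg a]
  have hw2 : ‖w‖ ^ 2 < 1 := by nlinarith [norm_nonneg w]
  exact mul_pos (sub_pos.2 ha2) (sub_pos.2 hw2)

theorem differentiableAt_mobius (ha : ‖a‖ < 1) (hw : ‖w‖ < 1) :
    DifferentiableAt ℂ (mobius a) w :=
  ((differentiableAt_id.add_const a).div
    ((differentiableAt_id.const_mul _).const_add 1) (one_add_conj_mul_ne_zero ha hw))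

theorem hasDerivAt_mobius_zero (a : ℂ) : HasDerivAt (mobius a) (1 - (‖a‖ : ℂ) ^ 2) 0 := by
  have h : HasDerivAt (mobius a) _ 0 := ((hasDerivAt_id (0 : ℂ)).add_const a).div
    (((hasDerivAt_id (0 : ℂ)).const_mul (conj a)).const_add 1) (by simp)
  refine h.congr_deriv ?_
  rw [← Complex.mul_conj']
  simp

end Mobius

theorem one_sub_sq_norm_mul_norm_deriv_le {f : ℂ → ℂ} {K : ℝ}
    (hf : DifferentiableOn ℂ f (ball 0 1)) (hK : ∀ w ∈ ball (0 : ℂ) 1, ‖f w‖ ≤ K)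
    {z : ℂ} (hz : z ∈ ball (0 : ℂ) 1) : (1 - ‖z‖ ^ 2) * ‖deriv f z‖ ≤ K := by
  rw [mem_ball_zero_iff] at hz
  have hmaps {w : ℂ} (hw : w ∈ ball (0 : ℂ) 1) : mobius z w ∈ ball (0 : ℂ) 1 :=
    mem_ball_zero_iff.2 (norm_mobius_lt_one hz (mem_ball_zero_iff.1 hw))
  have hfz : HasDerivAt f (deriv f z) (mobius z 0) := by
    rw [mobius_zero]
    exact (hf.differentiableAt (isOpen_ball.mem_nhds (mem_ball_zero_iff.2 hz))).hasDerivAt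
  have hderiv : deriv (f ∘ mobius z) 0 = deriv f z * (1 - (‖z‖ : ℂ) ^ 2) :=
    (hfz.comp 0 (hasDerivAt_mobius_zero z)).deriv
  have hcomp : DifferentiableOn ℂ (f ∘ mobius z) (ball 0 1) := fun w hw ↦
    (hf.differentiableAt (isOpen_ball.mem_nhds (hmaps hw))).comp w
      (differentiableAt_mobius hz (mem_ball_zero_iff.1 hw)) |>.differentiableWithinAt
  have hz2 : 0 ≤ 1 - ‖z‖ ^ 2 := by nlinarith [norm_nonneg z]
  calc (1 - ‖z‖ ^ 2) * ‖deriv f z‖ = ‖deriv (f ∘ mobius z) 0‖ := by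
        rw [hderiv, norm_mul, mul_comm, ← Complex.ofReal_pow, ← Complex.ofReal_one,
          ← Complex.ofReal_sub, Complex.norm_real, Real.norm_of_nonneg hz2]
    _ ≤ K / 1 := norm_deriv_le_div_of_forall_norm_le one_pos hcomp fun w hw ↦ hK _ (hmaps hw)
    _ = K := div_one K

theorem hasSum_taylorCoeff_mul_pow {f : ℂ → ℂ} (hf : DifferentiableOn ℂ f (ball 0 1))
    {z : ℂ} (hz : z ∈ ball (0 : ℂ) 1) :
    HasSum (fun n ↦ taylorCoeff f n * z ^ n) (f z) := by
  have hterm (n : ℕ) :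
      (n.factorial : ℂ)⁻¹ • (z - 0) ^ n • iteratedDeriv n f 0 = taylorCoeff f n * z ^ n := by
    rw [taylorCoeff, sub_zero, smul_eq_mul, smul_eq_mul]
    ring
  simpa only [hterm] using Complex.hasSum_taylorSeries_on_ball hf hz

theorem norm_taylorCoeff_sq_le_dirNormSq {α : ℝ} (hα : 0 ≤ α) {f : ℂ → ℂ}
    (hf : MemDirichlet α f) (n : ℕ) : ‖taylorCoeff f n‖ ^ 2 ≤ dirNormSq α f := by
  have hterm_nonneg (m : ℕ) : 0 ≤ ((m : ℝ) + 1) ^ α * ‖taylorCoeff f m‖ ^ 2 := by positivity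
  calc ‖taylorCoeff f n‖ ^ 2 ≤ ((n : ℝ) + 1) ^ α * ‖taylorCoeff f n‖ ^ 2 :=
        le_mul_of_one_le_left (sq_nonneg _) (Real.one_le_rpow (by simp) hα)
    _ ≤ dirNormSq α f := hf.2.le_tsum n fun m _ ↦ hterm_nonneg m

theorem norm_le_sqrt_dirNormSq_mul {α : ℝ} (hα : 0 ≤ α) {f : ℂ → ℂ} (hf : MemDirichlet α f)
    {z : ℂ} (hz : z ∈ ball (0 : ℂ) 1) :
    ‖f z‖ ≤ √(dirNormSq α f) * (1 - ‖z‖)⁻¹ := by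
  rw [mem_ball_zero_iff] at hz
  set S := √(dirNormSq α f)
  have hterm (n : ℕ) : ‖taylorCoeff f n * z ^ n‖ ≤ S * ‖z‖ ^ n := by
    rw [norm_mul, norm_pow]
    gcongr
    exact Real.le_sqrt_of_sq_le (norm_taylorCoeff_sq_le_dirNormSq hα hf n)
  have hgeom : Summable fun n : ℕ ↦ S * ‖z‖ ^ n :=
    (summable_geometric_of_lt_one (norm_nonneg z) hz).mul_left S
  calc ‖f z‖ ≤ ∑' n, S * ‖z‖ ^ n :=
        (hasSum_taylorCoeff_mul_pow hf.1 (mem_ball_zero_iff.2 hz)).norm_le_of_bounded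
          hgeom.hasSum hterm
    _ = S * (1 - ‖z‖)⁻¹ := by rw [tsum_mul_left, tsum_geometric_of_lt_one (norm_nonneg z) hz]

theorem taylorCoeff_const (c : ℂ) (n : ℕ) :
    taylorCoeff (fun _ ↦ c) n = if n = 0 then c else 0 := by
  split_ifs with hn <;> simp [taylorCoeff, iteratedDeriv_const, hn]

theorem memDirichlet_const (α : ℝ) (c : ℂ) : MemDirichlet α fun _ ↦ c := by
  refine ⟨differentiableOn_const c, summable_of_ne_finset_zero (s := {0}) fun n hn ↦ ?_⟩
  rw [Finset.mem_singleton] at hn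
  simp [taylorCoeff_const, hn]

theorem dirNormSq_const (α : ℝ) (c : ℂ) : dirNormSq α (fun _ ↦ c) = ‖c‖ ^ 2 := by
  rw [dirNormSq, tsum_eq_single 0 fun n hn ↦ by simp [taylorCoeff_const, hn]]
  simp [taylorCoeff_const]

-- Only `K ^ 2` enters: for `K < 0` this bounds the multiplier norm by `|K|`.
def MultiplierNormLE (α : ℝ) (φ : ℂ → ℂ) (K : ℝ) : Prop :=
  ∀ f : ℂ → ℂ, MemDirichlet α f → dirNormSq α (fun z ↦ φ z * f z) ≤ K ^ 2 * dirNormSq α f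

section Multiplier

variable {α : ℝ} {Q : ℂ → ℂ} {K : ℝ}

theorem IsMultiplier.memDirichlet_pow (hQ : IsMultiplier α Q) (n : ℕ) :
    MemDirichlet α fun z ↦ Q z ^ n := by
  induction n with
  | zero => simpa using memDirichlet_const α 1
  | succ n ih => simpa only [pow_succ'] using hQ.2 _ ih

theorem MultiplierNormLE.dirNormSq_pow_le (hK : MultiplierNormLE α Q K) (hQ : IsMultiplier α Q)
    (n : ℕ) : dirNormSq α (fun z ↦ Q z ^ n) ≤ (K ^ n) ^ 2 := by
  induction n with
  | zero => simp [dirNormSq_const]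
  | succ n ih =>
    calc dirNormSq α (fun z ↦ Q z ^ (n + 1)) = dirNormSq α (fun z ↦ Q z * Q z ^ n) := by
          simp only [pow_succ']
      _ ≤ K ^ 2 * dirNormSq α (fun z ↦ Q z ^ n) := hK _ (hQ.memDirichlet_pow n)
      _ ≤ K ^ 2 * (K ^ n) ^ 2 := by gcongr
      _ = (K ^ (n + 1)) ^ 2 := by ring

theorem MultiplierNormLE.norm_le (hK : MultiplierNormLE α Q K) (hK₀ : 0 ≤ K) (hα : 0 ≤ α)
    (hQ : IsMultiplier α Q) {z : ℂ} (hz : z ∈ ball (0 : ℂ) 1) : ‖Q z‖ ≤ K := by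
  refine le_of_forall_pow_le_mul_pow (C := (1 - ‖z‖)⁻¹) hK₀ fun n ↦ ?_
  calc ‖Q z‖ ^ n = ‖Q z ^ n‖ := (norm_pow _ _).symm
    _ ≤ √(dirNormSq α fun z ↦ Q z ^ n) * (1 - ‖z‖)⁻¹ :=
        norm_le_sqrt_dirNormSq_mul hα (hQ.memDirichlet_pow n) hz
    _ ≤ K ^ n * (1 - ‖z‖)⁻¹ := by
        have hc : 0 ≤ (1 - ‖z‖)⁻¹ := inv_nonneg.2 (by linarith [mem_ball_zero_iff.1 hz])
        gcongr
        exact Real.sqrt_le_iff.2 ⟨by positivity, hK.dirNormSq_pow_le hQ n⟩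
    _ = (1 - ‖z‖)⁻¹ * K ^ n := mul_comm _ _

end Multiplier

theorem stmt5_general (α : ℝ) (hα0 : 0 < α) (Q : ℂ → ℂ)
    (hQ : IsMultiplier α Q) (K : ℝ) (hK : 0 ≤ K)
    (hKbound : ∀ f : ℂ → ℂ, MemDirichlet α f →
      dirNormSq α (fun z => Q z * f z) ≤ K ^ 2 * dirNormSq α f) :
    ∀ z ∈ Metric.ball (0:ℂ) 1, (1 - ‖z‖ ^ 2) * ‖deriv Q z‖ ≤ K := fun _ hz ↦
  one_sub_sq_norm_mul_norm_deriv_le hQ.1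
    (fun _ hw ↦ MultiplierNormLE.norm_le hKbound hK hα0.le hQ hw) hz

/-- If `Q` is a multiplier of `D_α` and `K` is any bound for the operator norm of
multiplication by `Q` on `D_α`, then `(1-|z|²)|Q'(z)| ≤ K` for all `z` in the
unit disk. -/
theorem stmt5 (α : ℝ) (hα0 : 0 < α) (hα1 : α < 1) (Q : ℂ → ℂ)
    (hQ : IsMultiplier α Q) (K : ℝ) (hK : 0 ≤ K)
    (hKbound : ∀ f : ℂ → ℂ, MemDirichlet α f →
      dirNormSq α (fun z => Q z * f z) ≤ K ^ 2 * dirNormSq α f) :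
    ∀ z ∈ Metric.ball (0:ℂ) 1, (1 - ‖z‖ ^ 2) * ‖deriv Q z‖ ≤ K :=
  stmt5_general α hα0 Q hQ K hK hKbound
end

section
/- Let 0 < α < 1 and let f : (0,1) → [0,∞) be measurable. Then ∫₀¹ ∫₀¹ f(u) f(v) ( ∫_{max{u,v}}^1 (1 − s²)^{1−α} s^{−1} ds ) u du · v dv ≤ (25/16) ∫₀¹ f(u)² (1 − u²)^{1−α} u du. -/
/-!
Write `w(s) = (1 - s²)^(1-α)` and `K(u,v) = ∫_{max u v}^1 w(s)/s ds`. AM–GM gives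
`2 f(u) f(v) ≤ f(u)² + f(v)²`, and the kernel `k(u,v) = K(u,v) u v` is symmetric, so the double
integral is at most `∫ f(u)² (∫ k(u,v) dv) du` (a Schur test). As `w` is decreasing on `[0,1]`,
with `M = max u v` the bounds `w(s) ≤ w(u)` and `1/s ≤ 1/M` on `(M, 1)` give
`K(u,v) v ≤ w(u) (1 - M) v / M ≤ w(u)`. Hence `∫ k(u,v) dv ≤ w(u) u`, which proves the inequality
even with the constant `1` in place of `25/16`.
-/

open MeasureTheory Real Set ENNReal

theorem ENNReal.two_mul_ofReal_mul_ofReal_le (a b : ℝ) :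
    2 * ENNReal.ofReal a * ENNReal.ofReal b ≤ ENNReal.ofReal (a ^ 2) + ENNReal.ofReal (b ^ 2) := by
  rcases le_total a 0 with ha | ha
  · simp [ENNReal.ofReal_of_nonpos ha]
  rcases le_total b 0 with hb | hb
  · simp [ENNReal.ofReal_of_nonpos hb]
  rw [← ENNReal.ofReal_ofNat, ← ENNReal.ofReal_mul (by norm_num),
    ← ENNReal.ofReal_mul (by positivity), ← ENNReal.ofReal_add (sq_nonneg a) (sq_nonneg b)]
  exact ENNReal.ofReal_le_ofReal (two_mul_le_add_sq a b)

theorem lintegral_lintegral_ofReal_mul_le_of_symm {X : Type*} [MeasurableSpace X] {μ : Measure X}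
    [SFinite μ] {f : X → ℝ} (hf : Measurable f) {k : X → X → ℝ≥0∞}
    (hk : Measurable (Function.uncurry k)) (hsymm : ∀ x y, k x y = k y x) :
    ∫⁻ x, ∫⁻ y, ENNReal.ofReal (f x) * ENNReal.ofReal (f y) * k x y ∂μ ∂μ ≤
      ∫⁻ x, ENNReal.ofReal (f x ^ 2) * ∫⁻ y, k x y ∂μ ∂μ := by
  set F : X → ℝ≥0∞ := fun x => ENNReal.ofReal (f x ^ 2)
  have hF : Measurable F := (hf.pow_const 2).ennreal_ofReal
  have hswap : ∫⁻ x, ∫⁻ y, F y * k x y ∂μ ∂μ = ∫⁻ x, ∫⁻ y, F x * k x y ∂μ ∂μ := by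
    rw [lintegral_lintegral_swap ((hF.comp measurable_snd).mul hk).aemeasurable]
    simp_rw [hsymm]
  have hsplit : ∫⁻ x, ∫⁻ y, F x * k x y ∂μ ∂μ = ∫⁻ x, F x * ∫⁻ y, k x y ∂μ ∂μ :=
    lintegral_congr fun x => lintegral_const_mul _ hk.of_uncurry_left
  rw [← ENNReal.mul_le_mul_iff_right two_ne_zero ofNat_ne_top, ← hsplit]
  calc 2 * ∫⁻ x, ∫⁻ y, ENNReal.ofReal (f x) * ENNReal.ofReal (f y) * k x y ∂μ ∂μ
      = ∫⁻ x, ∫⁻ y, 2 * ENNReal.ofReal (f x) * ENNReal.ofReal (f y) * k x y ∂μ ∂μ := by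
        simp_rw [← lintegral_const_mul' 2 _ ofNat_ne_top, mul_assoc]
    _ ≤ ∫⁻ x, ∫⁻ y, (F x * k x y + F y * k x y) ∂μ ∂μ := by
        gcongr with x y
        rw [← add_mul]
        gcongr
        exact ENNReal.two_mul_ofReal_mul_ofReal_le (f x) (f y)
    _ = ∫⁻ x, (∫⁻ y, F x * k x y ∂μ + ∫⁻ y, F y * k x y ∂μ) ∂μ :=
        lintegral_congr fun x => lintegral_add_left (hk.of_uncurry_left.const_mul _) _
    _ = ∫⁻ x, ∫⁻ y, F x * k x y ∂μ ∂μ + ∫⁻ x, ∫⁻ y, F y * k x y ∂μ ∂μ :=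
        lintegral_add_left ((hF.comp measurable_fst).mul hk).lintegral_prod_right' _
    _ = 2 * ∫⁻ x, ∫⁻ y, F x * k x y ∂μ ∂μ := by rw [hswap, two_mul]

theorem antitoneOn_one_sub_sq_rpow {β : ℝ} (hβ : 0 ≤ β) :
    AntitoneOn (fun s : ℝ => (1 - s ^ 2) ^ β) (Icc 0 1) := fun _ hu _ hs hus =>
  Real.rpow_le_rpow (by nlinarith [hs.2, hs.1]) (by nlinarith [hu.1]) hβ

theorem antitone_setLIntegral_Ioo (g : ℝ → ℝ≥0∞) (b : ℝ) :
    Antitone fun a => ∫⁻ s in Ioo a b, g s := fun _ _ hab =>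
  lintegral_mono_set (Ioo_subset_Ioo_left hab)

theorem setLIntegral_Ioo_max_mul_ofReal_le {φ : ℝ → ℝ} (hφ : AntitoneOn φ (Icc 0 1)) {u v : ℝ}
    (hu : 0 < u) :
    (∫⁻ s in Ioo (max u v) 1, ENNReal.ofReal (φ s * s⁻¹)) * ENNReal.ofReal v ≤
      ENNReal.ofReal (φ u) := by
  set M := max u v
  have hM : 0 < M := lt_max_of_lt_left hu
  have hbound : ∀ s ∈ Ioo M 1, ENNReal.ofReal (φ s * s⁻¹) ≤
      ENNReal.ofReal (φ u) * ENNReal.ofReal M⁻¹ := by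
    intro s hs
    have hus : u < s := (le_max_left u v).trans_lt hs.1
    rw [ENNReal.ofReal_mul' (inv_nonneg.2 (hM.trans hs.1).le)]
    gcongr
    · exact hφ ⟨hu.le, (hus.trans hs.2).le⟩ ⟨(hu.trans hus).le, hs.2.le⟩ hus.le
    · exact hs.1.le
  have hvM : M⁻¹ * v ≤ 1 := by
    rw [inv_mul_le_one₀ hM]
    exact le_max_right u v
  calc (∫⁻ s in Ioo M 1, ENNReal.ofReal (φ s * s⁻¹)) * ENNReal.ofReal v
      ≤ ENNReal.ofReal (φ u) * ENNReal.ofReal M⁻¹ * ENNReal.ofReal (1 - M) * ENNReal.ofReal v := by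
        gcongr
        rw [← Real.volume_Ioo, ← setLIntegral_const]
        exact setLIntegral_mono' measurableSet_Ioo hbound
    _ = ENNReal.ofReal (φ u) * (ENNReal.ofReal (1 - M) * ENNReal.ofReal (M⁻¹ * v)) := by
        rw [ENNReal.ofReal_mul (by positivity)]
        ring
    _ ≤ ENNReal.ofReal (φ u) * 1 := by
        gcongr
        exact mul_le_one' (ENNReal.ofReal_le_one.2 (by linarith)) (ENNReal.ofReal_le_one.2 hvM)
    _ = ENNReal.ofReal (φ u) := mul_one _

noncomputable def tailKernel (φ : ℝ → ℝ) (u v : ℝ) : ℝ≥0∞ :=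
  (∫⁻ s in Ioo (max u v) 1, ENNReal.ofReal (φ s * s⁻¹)) * ENNReal.ofReal u * ENNReal.ofReal v

theorem tailKernel_comm (φ : ℝ → ℝ) (u v : ℝ) : tailKernel φ u v = tailKernel φ v u := by
  simp only [tailKernel, max_comm u v]
  ring

theorem measurable_tailKernel (φ : ℝ → ℝ) : Measurable (Function.uncurry (tailKernel φ)) :=
  ((antitone_setLIntegral_Ioo _ 1).measurable.comp (measurable_fst.max measurable_snd)).mul
    measurable_fst.ennreal_ofReal |>.mul measurable_snd.ennreal_ofReal

theorem setLIntegral_tailKernel_le {φ : ℝ → ℝ} (hφ : AntitoneOn φ (Icc 0 1)) {u : ℝ}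
    (hu : 0 < u) :
    ∫⁻ v in Ioo (0:ℝ) 1, tailKernel φ u v ≤ ENNReal.ofReal (φ u * u) :=
  calc ∫⁻ v in Ioo (0:ℝ) 1, tailKernel φ u v
      ≤ ∫⁻ v in Ioo (0:ℝ) 1, ENNReal.ofReal (φ u) * ENNReal.ofReal u := by
        refine lintegral_mono fun v => ?_
        simp only [tailKernel, mul_right_comm _ (ENNReal.ofReal u)]
        gcongr
        exact setLIntegral_Ioo_max_mul_ofReal_le hφ hu
    _ = ENNReal.ofReal (φ u * u) := by
        rw [setLIntegral_const, Real.volume_Ioo, sub_zero, ENNReal.ofReal_one, mul_one,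
          ENNReal.ofReal_mul' hu.le]

theorem stmt7_general (α : ℝ) (hα1 : α < 1) (f : ℝ → ℝ)
    (hf : Measurable f) :
    ∫⁻ u in Ioo (0:ℝ) 1, ∫⁻ v in Ioo (0:ℝ) 1,
        ENNReal.ofReal (f u) * ENNReal.ofReal (f v) *
          (∫⁻ s in Ioo (max u v) 1, ENNReal.ofReal ((1 - s^2) ^ (1 - α) * s⁻¹)) *
          ENNReal.ofReal u * ENNReal.ofReal v
      ≤ ENNReal.ofReal (25/16) *
        ∫⁻ u in Ioo (0:ℝ) 1, ENNReal.ofReal (f u ^ 2 * (1 - u^2) ^ (1 - α) * u) := by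
  set k := tailKernel fun s => (1 - s^2) ^ (1 - α)
  calc _ = ∫⁻ u in Ioo (0:ℝ) 1, ∫⁻ v in Ioo (0:ℝ) 1,
          ENNReal.ofReal (f u) * ENNReal.ofReal (f v) * k u v := by
        simp only [k, tailKernel, mul_assoc]
    _ ≤ ∫⁻ u in Ioo (0:ℝ) 1, ENNReal.ofReal (f u ^ 2) * ∫⁻ v in Ioo (0:ℝ) 1, k u v :=
        lintegral_lintegral_ofReal_mul_le_of_symm hf (measurable_tailKernel _) (tailKernel_comm _)
    _ ≤ ∫⁻ u in Ioo (0:ℝ) 1, ENNReal.ofReal (f u ^ 2 * (1 - u^2) ^ (1 - α) * u) := by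
        refine setLIntegral_mono' measurableSet_Ioo fun u hu => ?_
        rw [mul_assoc, ENNReal.ofReal_mul (sq_nonneg _)]
        gcongr
        exact setLIntegral_tailKernel_le (antitoneOn_one_sub_sq_rpow (by linarith)) hu.1
    _ ≤ ENNReal.ofReal (25/16) * _ :=
        le_mul_of_one_le_left' (ENNReal.one_le_ofReal.2 (by norm_num))

theorem stmt7 (α : ℝ) (hα0 : 0 < α) (hα1 : α < 1) (f : ℝ → ℝ)
    (hf : Measurable f) (hf0 : ∀ x ∈ Ioo (0:ℝ) 1, 0 ≤ f x) :
    ∫⁻ u in Ioo (0:ℝ) 1, ∫⁻ v in Ioo (0:ℝ) 1,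
        ENNReal.ofReal (f u) * ENNReal.ofReal (f v) *
          (∫⁻ s in Ioo (max u v) 1, ENNReal.ofReal ((1 - s^2) ^ (1 - α) * s⁻¹)) *
          ENNReal.ofReal u * ENNReal.ofReal v
      ≤ ENNReal.ofReal (25/16) *
        ∫⁻ u in Ioo (0:ℝ) 1, ENNReal.ofReal (f u ^ 2 * (1 - u^2) ^ (1 - α) * u) :=
  stmt7_general α hα1 f hf
end

section
/- Let 0 < α < 1 and let f : (0,1) → [0,∞) be measurable. Then ∫₀¹ ∫₀¹ f(x) f(y) ( ∫₀^{min{x,y}} s³ (1 − s²)^{−1−α} ds ) x dx · y dy ≤ (4/α²) ∫₀¹ f(x)² (1 − x²)^{1−α} x dx. -/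
/-!
Writing `∫₀^{min x y} k = ∫₀¹ 1_{s<x} 1_{s<y} k(s) ds` and applying Tonelli turns the left side
into `∫₀¹ k(s) (∫ₛ¹ f(x) x dx)² ds`, where `k(s) = s³ (1 - s²)^(-1-α)`. Cauchy–Schwarz against the
weight `x (1 - x²)^(α/2-1)`, whose integral over `(s, 1)` is `(1 - s²)^(α/2) / α`, bounds the square
by `(1 - s²)^(α/2) / α · ∫ₛ¹ f(x)² (1 - x²)^(1-α/2) x dx`. Swapping the integrals back, the factor
in front of `f(x)² (1 - x²)^(1-α/2) x` is at most
`∫₀ˣ s (1 - s²)^(-1-α/2) ds / α ≤ (1 - x²)^(-α/2) / α²`, so the bound holds even with `1 / α²`.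
-/

open MeasureTheory Real Set
open scoped ENNReal

theorem setLIntegral_indicator_of_subset {X : Type*} [MeasurableSpace X] {μ : Measure X}
    {s t : Set X} (ht : MeasurableSet t) (hts : t ⊆ s) (f : X → ℝ≥0∞) :
    ∫⁻ x in s, t.indicator f x ∂μ = ∫⁻ x in t, f x ∂μ := by
  rw [lintegral_indicator ht, Measure.restrict_restrict ht, inter_eq_left.mpr hts]

theorem lintegral_Ioo_mul_lintegral_Ioo_swap {a b : ℝ} {u c : ℝ → ℝ≥0∞} (hu : Measurable u)
    (hc : Measurable c) :
    ∫⁻ x in Ioo a b, u x * ∫⁻ s in Ioo a x, c s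
      = ∫⁻ s in Ioo a b, c s * ∫⁻ x in Ioo s b, u x := by
  let F : ℝ → ℝ → ℝ≥0∞ := fun x s =>
    {p : ℝ × ℝ | a < p.2 ∧ p.2 < p.1}.indicator (fun p => u p.1 * c p.2) (x, s)
  have hF : Measurable (Function.uncurry F) :=
    ((hu.comp measurable_fst).mul (hc.comp measurable_snd)).indicator
      ((measurableSet_lt measurable_const measurable_snd).inter
        (measurableSet_lt measurable_snd measurable_fst))
  calc ∫⁻ x in Ioo a b, u x * ∫⁻ s in Ioo a x, c s
      = ∫⁻ x in Ioo a b, ∫⁻ s in Ioo a b, F x s := by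
        refine setLIntegral_congr_fun measurableSet_Ioo fun x hx => ?_
        have hFx : F x = (Ioo a x).indicator fun s => u x * c s := by
          ext s; simp [F, indicator_apply, mem_Ioo]
        rw [hFx, setLIntegral_indicator_of_subset measurableSet_Ioo (Ioo_subset_Ioo_right hx.2.le),
          lintegral_const_mul _ hc]
    _ = ∫⁻ s in Ioo a b, ∫⁻ x in Ioo a b, F x s := lintegral_lintegral_swap hF.aemeasurable
    _ = ∫⁻ s in Ioo a b, c s * ∫⁻ x in Ioo s b, u x := by
        refine setLIntegral_congr_fun measurableSet_Ioo fun s hs => ?_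
        have hFs : (fun x => F x s) = (Ioi s).indicator fun x => c s * u x := by
          ext x; by_cases hx : s < x <;> simp [F, indicator_apply, hs.1, hx, mul_comm]
        rw [hFs, lintegral_indicator measurableSet_Ioi, Measure.restrict_restrict measurableSet_Ioi,
          Ioi_inter_Ioo, max_eq_left hs.1.le, lintegral_const_mul _ hu]

theorem lintegral_Ioo_mul_lintegral_Ioo_min {a b x : ℝ} {g k : ℝ → ℝ≥0∞} (hg : Measurable g)
    (hk : Measurable k) (hx : x ≤ b) :
    ∫⁻ y in Ioo a b, g y * ∫⁻ s in Ioo a (min x y), k s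
      = ∫⁻ s in Ioo a x, k s * ∫⁻ y in Ioo s b, g y := by
  have hmin : ∀ y, ∫⁻ s in Ioo a (min x y), k s = ∫⁻ s in Ioo a y, (Iio x).indicator k s := by
    intro y
    rw [lintegral_indicator measurableSet_Iio, Measure.restrict_restrict measurableSet_Iio,
      Iio_inter_Ioo]
  simp_rw [hmin]
  rw [lintegral_Ioo_mul_lintegral_Ioo_swap hg (hk.indicator measurableSet_Iio)]
  simp_rw [← indicator_mul_left (Iio x) k fun s => ∫⁻ y in Ioo s b, g y]
  rw [lintegral_indicator measurableSet_Iio, Measure.restrict_restrict measurableSet_Iio,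
    Iio_inter_Ioo, min_eq_left hx]

theorem lintegral_Ioo_lintegral_Ioo_mul_lintegral_Ioo_min {a b : ℝ} {g k : ℝ → ℝ≥0∞}
    (hg : Measurable g) (hk : Measurable k) :
    ∫⁻ x in Ioo a b, ∫⁻ y in Ioo a b, g x * g y * ∫⁻ s in Ioo a (min x y), k s
      = ∫⁻ s in Ioo a b, k s * (∫⁻ x in Ioo s b, g x) ^ 2 := by
  have hG : Measurable fun s => ∫⁻ x in Ioo s b, g x :=
    Antitone.measurable fun s t hst => lintegral_mono_set (Ioo_subset_Ioo_left hst)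
  have hK : ∀ x, Measurable fun y => ∫⁻ s in Ioo a (min x y), k s := fun x =>
    Monotone.measurable fun y z hyz =>
      lintegral_mono_set (Ioo_subset_Ioo_right (min_le_min_left x hyz))
  calc ∫⁻ x in Ioo a b, ∫⁻ y in Ioo a b, g x * g y * ∫⁻ s in Ioo a (min x y), k s
      = ∫⁻ x in Ioo a b, g x * ∫⁻ s in Ioo a x, k s * ∫⁻ y in Ioo s b, g y := by
        refine setLIntegral_congr_fun measurableSet_Ioo fun x hx => ?_
        simp_rw [mul_assoc]
        rw [lintegral_const_mul (f := fun y => g y * _) _ (hg.mul (hK x)),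
          lintegral_Ioo_mul_lintegral_Ioo_min hg hk hx.2.le]
    _ = ∫⁻ s in Ioo a b, k s * (∫⁻ x in Ioo s b, g x) ^ 2 := by
        rw [lintegral_Ioo_mul_lintegral_Ioo_swap (c := fun s => k s * _) hg (hk.mul hG)]
        simp_rw [mul_assoc, sq]

theorem lintegral_Ioo_ofReal_eq_sub_of_hasDerivAt {g g' : ℝ → ℝ} {a b : ℝ} (hab : a ≤ b)
    (hcont : ContinuousOn g (Icc a b)) (hderiv : ∀ x ∈ Ioo a b, HasDerivAt g (g' x) x)
    (hpos : ∀ x ∈ Ioo a b, 0 ≤ g' x) :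
    ∫⁻ x in Ioo a b, ENNReal.ofReal (g' x) = ENNReal.ofReal (g b - g a) := by
  have hint : IntegrableOn g' (Ioc a b) :=
    intervalIntegral.integrableOn_deriv_of_nonneg hcont hderiv hpos
  rw [← intervalIntegral.integral_eq_sub_of_hasDerivAt_of_le hab hcont hderiv
      ((intervalIntegrable_iff_integrableOn_Ioc_of_le hab).mpr hint),
    intervalIntegral.integral_of_le hab, integral_Ioc_eq_integral_Ioo,
    ofReal_integral_eq_lintegral_ofReal (hint.mono_set Ioo_subset_Ioc_self)
      ((ae_restrict_iff' measurableSet_Ioo).mpr (ae_of_all _ hpos))]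

theorem lintegral_Ioo_mul_one_sub_sq_rpow {q a b : ℝ} (hq : q ≠ 0) (ha : 0 ≤ a) (hab : a ≤ b)
    (hb : b ≤ 1) (hbq : b < 1 ∨ 0 < q) :
    ∫⁻ t in Ioo a b, ENNReal.ofReal (t * (1 - t ^ 2) ^ (q - 1))
      = ENNReal.ofReal (((1 - a ^ 2) ^ q - (1 - b ^ 2) ^ q) / (2 * q)) := by
  have hderiv : ∀ t ∈ Ioo a b, HasDerivAt (fun t : ℝ => (1 - t ^ 2) ^ q / -(2 * q))
      (t * (1 - t ^ 2) ^ (q - 1)) t := by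
    intro t ht
    have hpos : 0 < 1 - t ^ 2 := by nlinarith [ht.1, ht.2]
    refine ((((hasDerivAt_pow 2 t).const_sub 1).rpow_const (Or.inl hpos.ne')).div_const
      (-(2 * q))).congr_deriv ?_
    field_simp
    ring
  have hcont : ContinuousOn (fun t : ℝ => (1 - t ^ 2) ^ q / -(2 * q)) (Icc a b) := by
    refine (ContinuousOn.rpow_const (by fun_prop) fun t ht => ?_).div_const _
    rcases hbq with hb1 | hq0
    · exact Or.inl (by nlinarith [ht.1, ht.2])
    · exact Or.inr hq0.le
  rw [lintegral_Ioo_ofReal_eq_sub_of_hasDerivAt hab hcont hderiv fun t ht =>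
    mul_nonneg (ha.trans ht.1.le) (rpow_nonneg (by nlinarith [ht.1, ht.2]) _)]
  congr 1
  field_simp
  ring

theorem lintegral_sq_le_of_sq_le_mul {X : Type*} [MeasurableSpace X] {μ : Measure X}
    {g u v : X → ℝ≥0∞} (hu : AEMeasurable u μ) (hv : AEMeasurable v μ)
    (h : ∀ᵐ x ∂μ, g x ^ 2 ≤ u x * v x) :
    (∫⁻ x, g x ∂μ) ^ 2 ≤ (∫⁻ x, u x ∂μ) * ∫⁻ x, v x ∂μ := by
  have hsqrt : ∀ y : ℝ≥0∞, (y ^ (2⁻¹ : ℝ)) ^ 2 = y := by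
    simpa using ENNReal.rpow_inv_natCast_pow (n := 2) two_ne_zero
  have hg : ∀ᵐ x ∂μ, g x ≤ u x ^ (2⁻¹ : ℝ) * v x ^ (2⁻¹ : ℝ) := by
    filter_upwards [h] with x hx
    calc g x = (g x ^ 2) ^ (2⁻¹ : ℝ) := by
          simpa using (ENNReal.pow_rpow_inv_natCast two_ne_zero (g x)).symm
      _ ≤ (u x * v x) ^ (2⁻¹ : ℝ) := ENNReal.rpow_le_rpow hx (by norm_num)
      _ = u x ^ (2⁻¹ : ℝ) * v x ^ (2⁻¹ : ℝ) := ENNReal.mul_rpow_of_nonneg _ _ (by norm_num)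
  calc (∫⁻ x, g x ∂μ) ^ 2 ≤ (∫⁻ x, u x ^ (2⁻¹ : ℝ) * v x ^ (2⁻¹ : ℝ) ∂μ) ^ 2 := by
        gcongr ?_ ^ 2
        exact lintegral_mono_ae hg
    _ ≤ ((∫⁻ x, u x ∂μ) ^ (2⁻¹ : ℝ) * (∫⁻ x, v x ∂μ) ^ (2⁻¹ : ℝ)) ^ 2 := by
        gcongr ?_ ^ 2
        exact ENNReal.lintegral_mul_norm_pow_le hu hv (by norm_num) (by norm_num) (by norm_num)
    _ = (∫⁻ x, u x ∂μ) * ∫⁻ x, v x ∂μ := by rw [mul_pow, hsqrt, hsqrt]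

theorem ENNReal.ofReal_sq_le (y : ℝ) : ENNReal.ofReal y ^ 2 ≤ ENNReal.ofReal (y ^ 2) := by
  rcases le_total 0 y with hy | hy
  · rw [ENNReal.ofReal_pow hy]
  · simp [ENNReal.ofReal_of_nonpos hy]

theorem sq_lintegral_Ioo_le {β s : ℝ} {f : ℝ → ℝ} (hf : Measurable f) (hβ : 0 < β)
    (hs0 : 0 ≤ s) (hs1 : s < 1) :
    (∫⁻ x in Ioo s 1, ENNReal.ofReal (f x) * ENNReal.ofReal x) ^ 2
      ≤ ENNReal.ofReal ((1 - s ^ 2) ^ β / (2 * β)) *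
        ∫⁻ x in Ioo s 1, ENNReal.ofReal (f x ^ 2 * (1 - x ^ 2) ^ (1 - β) * x) := by
  have hweight : ∫⁻ x in Ioo s 1, ENNReal.ofReal (x * (1 - x ^ 2) ^ (β - 1))
      = ENNReal.ofReal ((1 - s ^ 2) ^ β / (2 * β)) := by
    rw [lintegral_Ioo_mul_one_sub_sq_rpow hβ.ne' hs0 hs1.le le_rfl (Or.inr hβ)]
    simp [zero_rpow hβ.ne']
  rw [← hweight, mul_comm]
  refine lintegral_sq_le_of_sq_le_mul (by fun_prop) (by fun_prop)
    ((ae_restrict_iff' measurableSet_Ioo).mpr (ae_of_all _ fun x hx => ?_))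
  have hx0 : 0 < x := hs0.trans_lt hx.1
  have hpos : 0 < 1 - x ^ 2 := by nlinarith [hx.2]
  have hcancel : (1 - x ^ 2) ^ (1 - β) * (1 - x ^ 2) ^ (β - 1) = 1 := by
    rw [← rpow_add hpos]; simp
  calc (ENNReal.ofReal (f x) * ENNReal.ofReal x) ^ 2 = ENNReal.ofReal (f x * x) ^ 2 := by
        rw [ENNReal.ofReal_mul' hx0.le]
    _ ≤ ENNReal.ofReal ((f x * x) ^ 2) := ENNReal.ofReal_sq_le _
    _ = ENNReal.ofReal (f x ^ 2 * (1 - x ^ 2) ^ (1 - β) * x) *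
          ENNReal.ofReal (x * (1 - x ^ 2) ^ (β - 1)) := by
        rw [← ENNReal.ofReal_mul (by positivity)]
        congr 1
        linear_combination (-(f x ^ 2 * x ^ 2)) * hcancel

theorem lintegral_Ioo_cube_mul_one_sub_sq_rpow_le {α x : ℝ} (hα : 0 < α) (hx0 : 0 ≤ x)
    (hx1 : x < 1) :
    ∫⁻ s in Ioo 0 x, ENNReal.ofReal (s ^ 3 * (1 - s ^ 2) ^ (-1 - α)) *
        ENNReal.ofReal ((1 - s ^ 2) ^ (α / 2) / α)
      ≤ ENNReal.ofReal ((1 - x ^ 2) ^ (-(α / 2)) / α ^ 2) := by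
  have hpoint : ∀ s ∈ Ioo 0 x, ENNReal.ofReal (s ^ 3 * (1 - s ^ 2) ^ (-1 - α)) *
      ENNReal.ofReal ((1 - s ^ 2) ^ (α / 2) / α)
        ≤ ENNReal.ofReal (1 / α) * ENNReal.ofReal (s * (1 - s ^ 2) ^ (-(α / 2) - 1)) := by
    intro s hs
    have hpos : 0 < 1 - s ^ 2 := by nlinarith [hs.1, hs.2]
    rw [← ENNReal.ofReal_mul (mul_nonneg (pow_nonneg hs.1.le 3) (rpow_nonneg hpos.le _)),
      ← ENNReal.ofReal_mul (by positivity)]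
    apply ENNReal.ofReal_le_ofReal
    calc s ^ 3 * (1 - s ^ 2) ^ (-1 - α) * ((1 - s ^ 2) ^ (α / 2) / α)
        = s ^ 3 * (1 - s ^ 2) ^ (-(α / 2) - 1) / α := by
          rw [show -(α / 2) - 1 = -1 - α + α / 2 by ring, rpow_add hpos]
          ring
      _ ≤ s * (1 - s ^ 2) ^ (-(α / 2) - 1) / α := by
          gcongr
          nlinarith [hs.1, hs.2]
      _ = 1 / α * (s * (1 - s ^ 2) ^ (-(α / 2) - 1)) := by ring
  calc _ ≤ ∫⁻ s in Ioo 0 x, ENNReal.ofReal (1 / α) *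
          ENNReal.ofReal (s * (1 - s ^ 2) ^ (-(α / 2) - 1)) :=
        setLIntegral_mono' measurableSet_Ioo hpoint
    _ = ENNReal.ofReal (1 / α * (((1 - 0 ^ 2) ^ (-(α / 2)) - (1 - x ^ 2) ^ (-(α / 2))) /
          (2 * -(α / 2)))) := by
        rw [lintegral_const_mul _ (by fun_prop), lintegral_Ioo_mul_one_sub_sq_rpow (by linarith)
          le_rfl hx0 hx1.le (Or.inl hx1), ENNReal.ofReal_mul (by positivity)]
    _ ≤ ENNReal.ofReal ((1 - x ^ 2) ^ (-(α / 2)) / α ^ 2) := by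
        apply ENNReal.ofReal_le_ofReal
        calc 1 / α * (((1 - 0 ^ 2) ^ (-(α / 2)) - (1 - x ^ 2) ^ (-(α / 2))) / (2 * -(α / 2)))
            = ((1 - x ^ 2) ^ (-(α / 2)) - 1) / α ^ 2 := by
              field_simp
              simp
          _ ≤ (1 - x ^ 2) ^ (-(α / 2)) / α ^ 2 := by gcongr; linarith

theorem ofReal_mul_lintegral_Ioo_cube_mul_one_sub_sq_rpow_le {α x y : ℝ} (hα : 0 < α)
    (hx : x ∈ Ioo (0 : ℝ) 1) :
    ENNReal.ofReal (y ^ 2 * (1 - x ^ 2) ^ (1 - α / 2) * x) *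
        ∫⁻ s in Ioo 0 x, ENNReal.ofReal (s ^ 3 * (1 - s ^ 2) ^ (-1 - α)) *
          ENNReal.ofReal ((1 - s ^ 2) ^ (α / 2) / α)
      ≤ ENNReal.ofReal (4 / α ^ 2) * ENNReal.ofReal (y ^ 2 * (1 - x ^ 2) ^ (1 - α) * x) := by
  have hpos : 0 < 1 - x ^ 2 := by nlinarith [hx.1, hx.2]
  calc _ ≤ ENNReal.ofReal (y ^ 2 * (1 - x ^ 2) ^ (1 - α / 2) * x) *
        ENNReal.ofReal ((1 - x ^ 2) ^ (-(α / 2)) / α ^ 2) := by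
        gcongr
        exact lintegral_Ioo_cube_mul_one_sub_sq_rpow_le hα hx.1.le hx.2
    _ = ENNReal.ofReal (1 / α ^ 2) * ENNReal.ofReal (y ^ 2 * (1 - x ^ 2) ^ (1 - α) * x) := by
        rw [← ENNReal.ofReal_mul (by positivity [hx.1.le]), ← ENNReal.ofReal_mul (by positivity)]
        congr 1
        rw [show 1 - α = 1 - α / 2 + -(α / 2) by ring, rpow_add hpos]
        ring
    _ ≤ ENNReal.ofReal (4 / α ^ 2) * ENNReal.ofReal (y ^ 2 * (1 - x ^ 2) ^ (1 - α) * x) := by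
        gcongr
        norm_num

theorem stmt8_general (α : ℝ) (hα0 : 0 < α) (f : ℝ → ℝ)
    (hf : Measurable f) :
    ∫⁻ x in Ioo (0:ℝ) 1, ∫⁻ y in Ioo (0:ℝ) 1,
        ENNReal.ofReal (f x) * ENNReal.ofReal (f y) *
          (∫⁻ s in Ioo (0:ℝ) (min x y), ENNReal.ofReal (s^3 * (1 - s^2) ^ (-1 - α))) *
          ENNReal.ofReal x * ENNReal.ofReal y
      ≤ ENNReal.ofReal (4 / α^2) *
        ∫⁻ x in Ioo (0:ℝ) 1, ENNReal.ofReal (f x ^ 2 * (1 - x^2) ^ (1 - α) * x) := by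
  set g : ℝ → ℝ≥0∞ := fun x => ENNReal.ofReal (f x) * ENNReal.ofReal x
  set k : ℝ → ℝ≥0∞ := fun s => ENNReal.ofReal (s ^ 3 * (1 - s ^ 2) ^ (-1 - α))
  set u : ℝ → ℝ≥0∞ := fun x => ENNReal.ofReal (f x ^ 2 * (1 - x ^ 2) ^ (1 - α / 2) * x)
  calc _ = ∫⁻ x in Ioo (0:ℝ) 1, ∫⁻ y in Ioo (0:ℝ) 1, g x * g y * ∫⁻ s in Ioo 0 (min x y), k s :=
        lintegral_congr fun x => lintegral_congr fun y => by ring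
    _ = ∫⁻ s in Ioo (0:ℝ) 1, k s * (∫⁻ x in Ioo s 1, g x) ^ 2 :=
        lintegral_Ioo_lintegral_Ioo_mul_lintegral_Ioo_min (by fun_prop) (by fun_prop)
    _ ≤ ∫⁻ s in Ioo (0:ℝ) 1, k s * ENNReal.ofReal ((1 - s ^ 2) ^ (α / 2) / α) *
          ∫⁻ x in Ioo s 1, u x := by
        refine setLIntegral_mono' measurableSet_Ioo fun s hs => ?_
        rw [mul_assoc]
        gcongr
        simpa only [mul_div_cancel₀ α two_ne_zero] using
          sq_lintegral_Ioo_le hf (half_pos hα0) hs.1.le hs.2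
    _ = ∫⁻ x in Ioo (0:ℝ) 1, u x *
          ∫⁻ s in Ioo 0 x, k s * ENNReal.ofReal ((1 - s ^ 2) ^ (α / 2) / α) :=
        (lintegral_Ioo_mul_lintegral_Ioo_swap (by fun_prop) (by fun_prop)).symm
    _ ≤ ∫⁻ x in Ioo (0:ℝ) 1,
          ENNReal.ofReal (4 / α ^ 2) * ENNReal.ofReal (f x ^ 2 * (1 - x ^ 2) ^ (1 - α) * x) :=
        setLIntegral_mono' measurableSet_Ioo fun x hx =>
          ofReal_mul_lintegral_Ioo_cube_mul_one_sub_sq_rpow_le hα0 hx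
    _ = _ := lintegral_const_mul _ (by fun_prop)

theorem stmt8 (α : ℝ) (hα0 : 0 < α) (hα1 : α < 1) (f : ℝ → ℝ)
    (hf : Measurable f) (hf0 : ∀ x ∈ Ioo (0:ℝ) 1, 0 ≤ f x) :
    ∫⁻ x in Ioo (0:ℝ) 1, ∫⁻ y in Ioo (0:ℝ) 1,
        ENNReal.ofReal (f x) * ENNReal.ofReal (f y) *
          (∫⁻ s in Ioo (0:ℝ) (min x y), ENNReal.ofReal (s^3 * (1 - s^2) ^ (-1 - α))) *
          ENNReal.ofReal x * ENNReal.ofReal y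
      ≤ ENNReal.ofReal (4 / α^2) *
        ∫⁻ x in Ioo (0:ℝ) 1, ENNReal.ofReal (f x ^ 2 * (1 - x^2) ^ (1 - α) * x) :=
  stmt8_general α hα0 f hf
end

section
/- Let 0 < α < 1, set β = 1 − α/2 and p(x) = (1 − x²)^{−β}. Then for every y ∈ (0,1), ∫₀¹ [ (1/(2α)) · min{x², y²} / ( (1 − min{x², y²})^α (1 − x²)^{1−α} (1 − y²)^{1−α} ) ] · p(x) (1 − x²)^{1−α} x dx ≤ (1/α²) p(y). -/
open MeasureTheory Real Set

/-! With `u = 1 - x²` and `v = 1 - y²`, the integrand is `x³ u^(-α/2-1) v^(α-1) / (2α)`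
for `x < y` and `y² x u^(α/2-1) / (2α v)` for `x > y`. Bounding `x²`, resp. `y²`, by `1`
leaves exact derivatives of multiples of `u^(-α/2)`, resp. `u^(α/2)`, and each of the two
pieces integrates to at most `v^(-β) / (2α²)`. -/

theorem hasDerivAt_neg_one_sub_sq_rpow_div {a x : ℝ} (ha : a ≠ 0) (hx : x ^ 2 < 1) :
    HasDerivAt (fun t => -(1 - t ^ 2) ^ a / (2 * a)) (x * (1 - x ^ 2) ^ (a - 1)) x := by
  have h := (((hasDerivAt_pow 2 x).const_sub 1).rpow_const (p := a)
    (Or.inl (by linarith))).neg.div_const (2 * a)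
  refine h.congr_deriv ?_
  field_simp
  norm_num
  ring

theorem setLIntegral_Ioc_ofReal_le_sub {g f f' : ℝ → ℝ} {a b : ℝ} (hab : a ≤ b)
    (hf : ContinuousOn f (Icc a b)) (hderiv : ∀ x ∈ Ioo a b, HasDerivAt f (f' x) x)
    (hf' : ∀ x ∈ Ioo a b, 0 ≤ f' x) (hg : ∀ x ∈ Ioo a b, g x ≤ f' x) :
    ∫⁻ x in Ioc a b, ENNReal.ofReal (g x) ≤ ENNReal.ofReal (f b - f a) := by
  have hint : IntegrableOn f' (Ioc a b) :=
    intervalIntegral.integrableOn_deriv_of_nonneg hf hderiv hf'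
  calc ∫⁻ x in Ioc a b, ENNReal.ofReal (g x)
      = ∫⁻ x in Ioo a b, ENNReal.ofReal (g x) := setLIntegral_congr Ioo_ae_eq_Ioc.symm
    _ ≤ ∫⁻ x in Ioo a b, ENNReal.ofReal (f' x) :=
        setLIntegral_mono' measurableSet_Ioo fun x hx => ENNReal.ofReal_le_ofReal (hg x hx)
    _ = ENNReal.ofReal (∫ x in Ioo a b, f' x) :=
        (ofReal_integral_eq_lintegral_ofReal (hint.mono_set Ioo_subset_Ioc_self)
          ((ae_restrict_iff' measurableSet_Ioo).2 (ae_of_all _ hf'))).symm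
    _ = ENNReal.ofReal (f b - f a) := by
        rw [← integral_Ioc_eq_integral_Ioo, ← intervalIntegral.integral_of_le hab,
          intervalIntegral.integral_eq_sub_of_hasDerivAt_of_le hab hf hderiv
            ((intervalIntegrable_iff_integrableOn_Ioc_of_le hab).2 hint)]

noncomputable def weightedKernel (α x y : ℝ) : ℝ :=
  (1 / (2 * α)) * min (x ^ 2) (y ^ 2) /
      ((1 - min (x ^ 2) (y ^ 2)) ^ α * (1 - x ^ 2) ^ (1 - α) * (1 - y ^ 2) ^ (1 - α)) *
    ((1 - x ^ 2) ^ (-(1 - α / 2)) * (1 - x ^ 2) ^ (1 - α) * x)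

theorem weightedKernel_le_of_le {α x y : ℝ} (hα : 0 ≤ α) (hx : 0 < x) (hxy : x ≤ y)
    (hy : y < 1) :
    weightedKernel α x y
      ≤ (1 - y ^ 2) ^ (α - 1) / (2 * α) * (x * (1 - x ^ 2) ^ (-(α / 2) - 1)) := by
  have hu : 0 < 1 - x ^ 2 := by nlinarith
  have hv : 0 < 1 - y ^ 2 := by nlinarith
  have hmin : min (x ^ 2) (y ^ 2) = x ^ 2 := min_eq_left (by nlinarith)
  have hu1 : (1 - x ^ 2) ^ α * (1 - x ^ 2) ^ (1 - α) = 1 - x ^ 2 := by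
    rw [← rpow_add hu]; simp
  have hu2 :
      (1 - x ^ 2) ^ (-(1 - α / 2)) = (1 - x ^ 2) ^ (-(α / 2) - 1) * (1 - x ^ 2) ^ α := by
    rw [← rpow_add hu]; ring_nf
  have hv1 : (1 - y ^ 2) ^ (1 - α) = ((1 - y ^ 2) ^ (α - 1))⁻¹ := by
    rw [← rpow_neg hv.le]; ring_nf
  have heq : weightedKernel α x y
      = x ^ 2 * ((1 - y ^ 2) ^ (α - 1) / (2 * α) * (x * (1 - x ^ 2) ^ (-(α / 2) - 1))) := by
    rw [weightedKernel, hmin, hu2, hv1, mul_assoc ((1 - x ^ 2) ^ (-(α / 2) - 1)), hu1]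
    field_simp
  rw [heq]
  exact mul_le_of_le_one_left (by positivity) (by nlinarith)

theorem weightedKernel_le_of_ge {α x y : ℝ} (hα : 0 ≤ α) (hy : 0 < y) (hyx : y ≤ x)
    (hx : x < 1) :
    weightedKernel α x y ≤ (1 - y ^ 2)⁻¹ / (2 * α) * (x * (1 - x ^ 2) ^ (α / 2 - 1)) := by
  have hu : 0 < 1 - x ^ 2 := by nlinarith
  have hv : 0 < 1 - y ^ 2 := by nlinarith
  have hx0 : 0 < x := hy.trans_le hyx
  have hmin : min (x ^ 2) (y ^ 2) = y ^ 2 := min_eq_right (by nlinarith)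
  have hv1 : (1 - y ^ 2) ^ α * (1 - y ^ 2) ^ (1 - α) = 1 - y ^ 2 := by
    rw [← rpow_add hv]; simp
  have hu1 : (1 - x ^ 2) ^ (-(1 - α / 2)) = (1 - x ^ 2) ^ (α / 2 - 1) := by ring_nf
  have heq : weightedKernel α x y
      = y ^ 2 * ((1 - y ^ 2)⁻¹ / (2 * α) * (x * (1 - x ^ 2) ^ (α / 2 - 1))) := by
    rw [weightedKernel, hmin, hu1, mul_right_comm ((1 - y ^ 2) ^ α), hv1]
    field_simp
  rw [heq]
  exact mul_le_of_le_one_left (by positivity) (by nlinarith)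

theorem lintegral_weightedKernel_Ioc_zero_le {α y : ℝ} (hα : 0 < α) (hy0 : 0 < y)
    (hy1 : y < 1) :
    ∫⁻ x in Ioc 0 y, ENNReal.ofReal (weightedKernel α x y)
      ≤ ENNReal.ofReal ((1 - y ^ 2) ^ (-(1 - α / 2)) / (2 * α ^ 2)) := by
  have hv : 0 < 1 - y ^ 2 := by nlinarith
  set c := (1 - y ^ 2) ^ (α - 1) / (2 * α)
  have hu : ∀ x ∈ Icc 0 y, 0 < 1 - x ^ 2 := fun x hx => by nlinarith [hx.1, hx.2]
  have hderiv : ∀ x ∈ Ioo 0 y,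
      HasDerivAt (fun t => c * (-(1 - t ^ 2) ^ (-(α / 2)) / (2 * -(α / 2))))
        (c * (x * (1 - x ^ 2) ^ (-(α / 2) - 1))) x := fun x hx =>
    (hasDerivAt_neg_one_sub_sq_rpow_div (neg_ne_zero.2 (by positivity))
      (by linarith [hu x (Ioo_subset_Icc_self hx)])).const_mul c
  have hcont :
      ContinuousOn (fun t => c * (-(1 - t ^ 2) ^ (-(α / 2)) / (2 * -(α / 2)))) (Icc 0 y) :=
    continuousOn_const.mul ((ContinuousOn.rpow_const (by fun_prop)
      fun x hx => Or.inl (hu x hx).ne').neg.div_const _)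
  have hpow :
      (1 - y ^ 2) ^ (α - 1) * (1 - y ^ 2) ^ (-(α / 2)) = (1 - y ^ 2) ^ (-(1 - α / 2)) := by
    rw [← rpow_add hv]; ring_nf
  calc _ ≤ _ := setLIntegral_Ioc_ofReal_le_sub hy0.le hcont hderiv
        (fun x hx => mul_nonneg (by positivity)
          (mul_nonneg hx.1.le (rpow_nonneg (hu x (Ioo_subset_Icc_self hx)).le _)))
        (fun x hx => weightedKernel_le_of_le hα.le hx.1 hx.2.le hy1)
    _ ≤ _ := by
      apply ENNReal.ofReal_le_ofReal
      rw [← hpow]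
      have : 0 < (1 - y ^ 2) ^ (α - 1) := rpow_pos_of_pos hv _
      simp only [c]
      norm_num
      field_simp
      linarith

theorem lintegral_weightedKernel_Ioc_one_le {α y : ℝ} (hα : 0 < α) (hy0 : 0 < y)
    (hy1 : y < 1) :
    ∫⁻ x in Ioc y 1, ENNReal.ofReal (weightedKernel α x y)
      ≤ ENNReal.ofReal ((1 - y ^ 2) ^ (-(1 - α / 2)) / (2 * α ^ 2)) := by
  have hv : 0 < 1 - y ^ 2 := by nlinarith
  set c := (1 - y ^ 2)⁻¹ / (2 * α)
  have hderiv : ∀ x ∈ Ioo y 1,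
      HasDerivAt (fun t => c * (-(1 - t ^ 2) ^ (α / 2) / (2 * (α / 2))))
        (c * (x * (1 - x ^ 2) ^ (α / 2 - 1))) x := fun x hx =>
    (hasDerivAt_neg_one_sub_sq_rpow_div (by positivity) (by nlinarith [hx.1, hx.2])).const_mul c
  have hcont :
      ContinuousOn (fun t => c * (-(1 - t ^ 2) ^ (α / 2) / (2 * (α / 2)))) (Icc y 1) :=
    continuousOn_const.mul ((ContinuousOn.rpow_const (by fun_prop)
      fun _ _ => Or.inr (by positivity)).neg.div_const _)
  have hpow : (1 - y ^ 2)⁻¹ * (1 - y ^ 2) ^ (α / 2) = (1 - y ^ 2) ^ (-(1 - α / 2)) := by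
    rw [← rpow_neg_one, ← rpow_add hv]; ring_nf
  calc _ ≤ _ := setLIntegral_Ioc_ofReal_le_sub hy1.le hcont hderiv
        (fun x hx => mul_nonneg (by positivity)
          (mul_nonneg (hy0.trans hx.1).le (rpow_nonneg (by nlinarith [hx.1, hx.2]) _)))
        (fun x hx => weightedKernel_le_of_ge hα.le hy0 hx.1.le hx.2)
    _ = _ := by
      rw [← hpow]
      simp only [c]
      norm_num [zero_rpow (by positivity : α / 2 ≠ 0)]
      field_simp

theorem stmt9_general (α : ℝ) (hα0 : 0 < α) (β : ℝ) (hβ : β = 1 - α / 2)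
    (p : ℝ → ℝ) (hp : ∀ x, p x = (1 - x^2) ^ (-β)) (y : ℝ) (hy : y ∈ Ioo (0:ℝ) 1) :
    ∫⁻ x in Ioo (0:ℝ) 1,
        ENNReal.ofReal ((1 / (2 * α)) * min (x^2) (y^2) /
            ((1 - min (x^2) (y^2)) ^ α * (1 - x^2) ^ (1 - α) * (1 - y^2) ^ (1 - α)) *
          (p x * (1 - x^2) ^ (1 - α) * x))
      ≤ ENNReal.ofReal ((1 / α^2) * p y) := by
  obtain ⟨hy0, hy1⟩ := hy
  subst hβ
  simp only [hp]
  have hv : 0 < 1 - y ^ 2 := by nlinarith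
  calc ∫⁻ x in Ioo 0 1, ENNReal.ofReal (weightedKernel α x y)
      ≤ ∫⁻ x in Ioc 0 y ∪ Ioc y 1, ENNReal.ofReal (weightedKernel α x y) := by
        rw [Ioc_union_Ioc_eq_Ioc hy0.le hy1.le]
        exact lintegral_mono_set Ioo_subset_Ioc_self
    _ ≤ _ := lintegral_union_le _ _ _
    _ ≤ _ := add_le_add (lintegral_weightedKernel_Ioc_zero_le hα0 hy0 hy1)
        (lintegral_weightedKernel_Ioc_one_le hα0 hy0 hy1)
    _ = _ := by
        rw [← ENNReal.ofReal_add (by positivity) (by positivity)]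
        congr 1
        ring

theorem stmt9 (α : ℝ) (hα0 : 0 < α) (hα1 : α < 1) (β : ℝ) (hβ : β = 1 - α / 2)
    (p : ℝ → ℝ) (hp : ∀ x, p x = (1 - x^2) ^ (-β)) (y : ℝ) (hy : y ∈ Ioo (0:ℝ) 1) :
    ∫⁻ x in Ioo (0:ℝ) 1,
        ENNReal.ofReal ((1 / (2 * α)) * min (x^2) (y^2) /
            ((1 - min (x^2) (y^2)) ^ α * (1 - x^2) ^ (1 - α) * (1 - y^2) ^ (1 - α)) *
          (p x * (1 - x^2) ^ (1 - α) * x))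
      ≤ ENNReal.ofReal ((1 / α^2) * p y) :=
  stmt9_general α hα0 β hβ p hp y hy
end

section
/- Let 0 < α < 1 and define, for f ∈ L²_α[0,1], the operator (T₀ f)(s) = −∫₀^s (r/s) f(r) dr + (1/(1 − s²)) ∫_s^1 r s f(r) dr for s ∈ (0,1). Then ∫₀¹ |T₀ f(s)|² (1 − s²)^{1−α} s ds ≤ (5/α²)² ∫₀¹ |f(r)|² (1 − r²)^{1−α} r dr. -/
open MeasureTheory Real Set ENNReal NNReal

/-- The operator `T₀` of the radial decomposition:
`(T₀ f)(s) = -∫₀ˢ (r/s) f(r) dr + (1/(1-s²)) ∫_s^1 r s f(r) dr`. -/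
noncomputable def T0 (f : ℝ → ℂ) (s : ℝ) : ℂ :=
  -(∫ r in Ioo (0:ℝ) s, ((r / s : ℝ) : ℂ) * f r) +
    ((1 / (1 - s^2) : ℝ) : ℂ) * ∫ r in Ioo s (1:ℝ), ((r * s : ℝ) : ℂ) * f r

/-!
`|T₀ f (s)|` is dominated by `∫₀¹ k(s,r) |f(r)| dr` with the nonnegative kernel
`k(s,r) = r/s` for `r < s` and `k(s,r) = rs/(1-s²)` for `r ≥ s`. A weighted Schur test with the
test function `H(r) = r⁻¹ (1-r²)^(α/2-1)` (`T0.schurWeight`) on the input side and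
`G(s) = H(s) (1-s²)^(1-α) s = (1-s²)^(-α/2)` on the output side gives
`∫ k(s,r) H(r) dr ≤ (4/α) H(s)` and `∫ k(s,r) G(s) ds ≤ (3/α) G(r)`, hence the bound with
constant `12/α² ≤ (5/α²)²`. Each of the four one-sided integrals is estimated by comparing
`(1-x²)^β` with `(1-x)^β`, which integrates explicitly, except `∫₀^r s (1-s²)^(-α/2-1) ds`,
which has the antiderivative `(1-s²)^(-α/2)/α`.
-/

namespace MeasureTheory

variable {X Y : Type*} [MeasurableSpace X] [MeasurableSpace Y] {μ : Measure X} {ν : Measure Y}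

theorem sq_lintegral_mul_le_mul_lintegral_sq {f g : Y → ℝ≥0∞} (hf : AEMeasurable f ν)
    (hg : AEMeasurable g ν) :
    (∫⁻ r, f r * g r ∂ν) ^ 2 ≤ (∫⁻ r, f r ^ 2 ∂ν) * ∫⁻ r, g r ^ 2 ∂ν := by
  have h := lintegral_mul_le_Lp_mul_Lq ν Real.HolderConjugate.two_two hf hg
  simp only [Pi.mul_apply, ENNReal.rpow_two] at h
  calc (∫⁻ r, f r * g r ∂ν) ^ 2
      ≤ ((∫⁻ r, f r ^ 2 ∂ν) ^ (1 / (2:ℝ)) * (∫⁻ r, g r ^ 2 ∂ν) ^ (1 / (2:ℝ))) ^ 2 := by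
        gcongr
    _ = (∫⁻ r, f r ^ 2 ∂ν) * ∫⁻ r, g r ^ 2 ∂ν := by
        rw [mul_pow, ← ENNReal.rpow_natCast, ← ENNReal.rpow_mul, ← ENNReal.rpow_natCast,
          ← ENNReal.rpow_mul]
        norm_num

/-- Cauchy–Schwarz with the weight `p`: `k φ = √(k p) · √(k φ² / p)`. -/
theorem sq_lintegral_mul_le_lintegral_mul_mul_lintegral_div {k φ p : Y → ℝ≥0∞}
    (hk : AEMeasurable k ν) (hφ : AEMeasurable φ ν) (hp : AEMeasurable p ν)
    (hp_pos : ∀ᵐ r ∂ν, p r ≠ 0 ∧ p r ≠ ∞) :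
    (∫⁻ r, k r * φ r ∂ν) ^ 2 ≤ (∫⁻ r, k r * p r ∂ν) * ∫⁻ r, k r * φ r ^ 2 / p r ∂ν := by
  set u : Y → ℝ≥0∞ := fun r => (k r * p r) ^ (1 / 2 : ℝ)
  set v : Y → ℝ≥0∞ := fun r => (k r * φ r ^ 2 / p r) ^ (1 / 2 : ℝ)
  have hsq : ∀ x : ℝ≥0∞, (x ^ (1 / 2 : ℝ)) ^ 2 = x := fun x => by
    rw [← ENNReal.rpow_natCast, ← ENNReal.rpow_mul]; norm_num
  have huv : ∀ᵐ r ∂ν, u r * v r = k r * φ r := by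
    filter_upwards [hp_pos] with r ⟨hp0, hptop⟩
    rw [← ENNReal.mul_rpow_of_nonneg _ _ (by norm_num), div_eq_mul_inv,
      show k r * p r * (k r * φ r ^ 2 * (p r)⁻¹) = (k r * φ r) ^ 2 * (p r * (p r)⁻¹) by ring,
      ENNReal.mul_inv_cancel hp0 hptop, mul_one, ← ENNReal.rpow_natCast, ← ENNReal.rpow_mul]
    norm_num
  calc (∫⁻ r, k r * φ r ∂ν) ^ 2 = (∫⁻ r, u r * v r ∂ν) ^ 2 := by rw [lintegral_congr_ae huv]
    _ ≤ (∫⁻ r, u r ^ 2 ∂ν) * ∫⁻ r, v r ^ 2 ∂ν :=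
        sq_lintegral_mul_le_mul_lintegral_sq ((hk.mul hp).pow_const _)
          (((hk.mul (hφ.pow_const 2)).div hp).pow_const _)
    _ = (∫⁻ r, k r * p r ∂ν) * ∫⁻ r, k r * φ r ^ 2 / p r ∂ν := by simp only [u, v, hsq]

variable [SFinite μ] [SFinite ν]

theorem lintegral_sq_lintegral_kernel_le_of_schur {K : X → Y → ℝ≥0∞}
    (hK : Measurable (Function.uncurry K)) {φ p w : Y → ℝ≥0∞} {q v : X → ℝ≥0∞} {A B : ℝ≥0∞}
    (hφ : Measurable φ) (hp : Measurable p) (hw : Measurable w) (hq : Measurable q)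
    (hv : Measurable v)
    (hp_pos : ∀ᵐ r ∂ν, p r ≠ 0 ∧ p r ≠ ∞)
    (hKp : ∀ᵐ s ∂μ, ∫⁻ r, K s r * p r ∂ν ≤ A * q s)
    (hKq : ∀ᵐ r ∂ν, ∫⁻ s, K s r * (q s * v s) ∂μ ≤ B * (p r * w r)) :
    ∫⁻ s, (∫⁻ r, K s r * φ r ∂ν) ^ 2 * v s ∂μ ≤ A * B * ∫⁻ r, φ r ^ 2 * w r ∂ν := by
  have hKs : ∀ s, Measurable (K s) := fun s => hK.comp measurable_prodMk_left
  have hKs' : ∀ r, Measurable (K · r) := fun r => hK.comp measurable_prodMk_right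
  set F : X → Y → ℝ≥0∞ := fun s r => K s r * (φ r ^ 2 / p r) * (q s * v s)
  have hF : Measurable (Function.uncurry F) :=
    (hK.mul (((hφ.pow_const 2).div hp).comp measurable_snd)).mul
      ((hq.mul hv).comp measurable_fst)
  calc ∫⁻ s, (∫⁻ r, K s r * φ r ∂ν) ^ 2 * v s ∂μ
      ≤ ∫⁻ s, A * ∫⁻ r, F s r ∂ν ∂μ := by
        refine lintegral_mono_ae ?_
        filter_upwards [hKp] with s hs
        calc (∫⁻ r, K s r * φ r ∂ν) ^ 2 * v s
            ≤ (A * q s) * (∫⁻ r, K s r * φ r ^ 2 / p r ∂ν) * v s := by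
              gcongr
              exact (sq_lintegral_mul_le_lintegral_mul_mul_lintegral_div (hKs s).aemeasurable
                hφ.aemeasurable hp.aemeasurable hp_pos).trans (by gcongr)
          _ = A * ∫⁻ r, F s r ∂ν := by
              simp only [F, mul_div_assoc]
              have hm : Measurable fun r => K s r * (φ r ^ 2 / p r) :=
                (hKs s).mul ((hφ.pow_const 2).div hp)
              rw [lintegral_mul_const _ hm]
              ring
    _ = A * ∫⁻ r, ∫⁻ s, F s r ∂μ ∂ν := by
        rw [lintegral_const_mul _ hF.lintegral_prod_right,
          lintegral_lintegral_swap hF.aemeasurable]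
    _ ≤ A * ∫⁻ r, B * (φ r ^ 2 * w r) ∂ν := by
        gcongr A * ?_
        refine lintegral_mono_ae ?_
        filter_upwards [hKq, hp_pos] with r hr ⟨hp0, hptop⟩
        calc ∫⁻ s, F s r ∂μ = φ r ^ 2 / p r * ∫⁻ s, K s r * (q s * v s) ∂μ := by
              have hm : Measurable fun s => K s r * (q s * v s) := (hKs' r).mul (hq.mul hv)
              rw [← lintegral_const_mul _ hm]
              exact lintegral_congr fun s => by simp only [F]; ring
          _ ≤ φ r ^ 2 / p r * (B * (p r * w r)) := by gcongr
          _ = B * (φ r ^ 2 * w r) := by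
              rw [div_eq_mul_inv, show φ r ^ 2 * (p r)⁻¹ * (B * (p r * w r))
                = B * (φ r ^ 2 * w r) * ((p r)⁻¹ * p r) by ring,
                ENNReal.inv_mul_cancel hp0 hptop, mul_one]
    _ = A * B * ∫⁻ r, φ r ^ 2 * w r ∂ν := by
        have hm : Measurable fun r => φ r ^ 2 * w r := (hφ.pow_const 2).mul hw
        rw [lintegral_const_mul _ hm, mul_assoc]

end MeasureTheory

theorem setLIntegral_Ioo_ofReal_le_intervalIntegral {f g : ℝ → ℝ} {a b : ℝ} (hab : a ≤ b)
    (hg : IntervalIntegrable g volume a b) (hfg : ∀ x ∈ Ioo a b, f x ≤ g x)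
    (hg0 : ∀ x ∈ Ioo a b, 0 ≤ g x) :
    ∫⁻ x in Ioo a b, ENNReal.ofReal (f x) ≤ ENNReal.ofReal (∫ x in a..b, g x) := by
  have hg' : IntegrableOn g (Ioo a b) :=
    (intervalIntegrable_iff_integrableOn_Ioo_of_le hab).1 hg
  rw [intervalIntegral.integral_of_le hab, integral_Ioc_eq_integral_Ioo,
    ofReal_integral_eq_lintegral_ofReal hg'
      ((ae_restrict_iff' measurableSet_Ioo).2 (ae_of_all _ hg0))]
  exact setLIntegral_mono' measurableSet_Ioo fun x hx => ENNReal.ofReal_le_ofReal (hfg x hx)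

theorem setLIntegral_Ioo_eq_add {f : ℝ → ℝ≥0∞} {a b c : ℝ} (hab : a < b) (hbc : b ≤ c) :
    ∫⁻ x in Ioo a c, f x = (∫⁻ x in Ioo a b, f x) + ∫⁻ x in Ioo b c, f x := by
  rw [← Ioo_union_Ico_eq_Ioo hab hbc,
    lintegral_union measurableSet_Ico (Ico_disjoint_Ico_same.mono_left Ioo_subset_Ico_self),
    setLIntegral_congr (Ioo_ae_eq_Ico (a := b) (b := c)).symm]

lemma one_sub_sq_pos_of_mem_Ioo {x : ℝ} (hx : x ∈ Ioo (0:ℝ) 1) : 0 < 1 - x ^ 2 := by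
  nlinarith [hx.1, hx.2]

lemma rpow_one_sub_sq_le_rpow_one_sub {x β : ℝ} (hx0 : 0 ≤ x) (hx1 : x < 1) (hβ : β ≤ 0) :
    (1 - x ^ 2) ^ β ≤ (1 - x) ^ β :=
  Real.rpow_le_rpow_of_nonpos (by linarith) (by nlinarith) hβ

theorem setLIntegral_le_of_le_mul_one_sub_sq_rpow {f : ℝ → ℝ} {c γ a b : ℝ} (hc : 0 ≤ c)
    (hγ0 : 0 < γ) (hγ1 : γ ≤ 1) (ha : 0 ≤ a) (hab : a ≤ b) (hb : b ≤ 1)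
    (hf : ∀ x ∈ Ioo a b, f x ≤ c * (1 - x ^ 2) ^ (γ - 1)) :
    ∫⁻ x in Ioo a b, ENNReal.ofReal (f x)
      ≤ ENNReal.ofReal (c * (((1 - a) ^ γ - (1 - b) ^ γ) / γ)) := by
  have hp : -1 < γ - 1 := by linarith
  have hint : IntervalIntegrable (fun x => c * (1 - x) ^ (γ - 1)) volume a b := by
    refine IntervalIntegrable.const_mul ?_ c
    simpa using
      (intervalIntegral.intervalIntegrable_rpow' (a := 1 - a) (b := 1 - b) hp).comp_sub_left 1
  have hval : ∫ x in a..b, c * (1 - x) ^ (γ - 1) = c * (((1 - a) ^ γ - (1 - b) ^ γ) / γ) := by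
    rw [intervalIntegral.integral_const_mul,
      intervalIntegral.integral_comp_sub_left (fun y : ℝ => y ^ (γ - 1)) 1,
      integral_rpow (Or.inl hp), sub_add_cancel]
  rw [← hval]
  refine setLIntegral_Ioo_ofReal_le_intervalIntegral hab hint (fun x hx => ?_) (fun x hx => ?_)
  · exact (hf x hx).trans (mul_le_mul_of_nonneg_left
      (rpow_one_sub_sq_le_rpow_one_sub (ha.trans hx.1.le) (hx.2.trans_le hb) (by linarith)) hc)
  · exact mul_nonneg hc (Real.rpow_nonneg (by linarith [hx.2]) _)

namespace T0

noncomputable def kernel (s r : ℝ) : ℝ := if r < s then r / s else r * s / (1 - s ^ 2)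

noncomputable def schurWeight (α r : ℝ) : ℝ := r⁻¹ * (1 - r ^ 2) ^ (α / 2 - 1)

variable {α : ℝ}

theorem lintegral_div_mul_schurWeight_le (hα0 : 0 < α) (hα2 : α ≤ 2) {s : ℝ}
    (hs : s ∈ Ioo (0:ℝ) 1) :
    ∫⁻ r in Ioo 0 s, ENNReal.ofReal (r / s * schurWeight α r)
      ≤ ENNReal.ofReal (2 / α * schurWeight α s) := by
  refine (setLIntegral_le_of_le_mul_one_sub_sq_rpow (c := s⁻¹) (γ := α / 2)
    (inv_nonneg.2 hs.1.le) (by positivity) (by linarith) le_rfl hs.1.le hs.2.le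
    fun r hr => le_of_eq ?_).trans ?_
  · have : r ≠ 0 := hr.1.ne'
    rw [schurWeight]; generalize (1 - r ^ 2) ^ (α / 2 - 1) = X; field_simp
  · refine ENNReal.ofReal_le_ofReal ?_
    have hY : 0 ≤ (1 - s) ^ (α / 2) := Real.rpow_nonneg (by linarith [hs.2]) _
    have hZ : 1 ≤ (1 - s ^ 2) ^ (α / 2 - 1) :=
      Real.one_le_rpow_of_pos_of_le_one_of_nonpos (one_sub_sq_pos_of_mem_Ioo hs)
        (by nlinarith [hs.1]) (by linarith)
    have hs' : 0 < s⁻¹ := inv_pos.2 hs.1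
    rw [sub_zero, Real.one_rpow, schurWeight]
    calc s⁻¹ * ((1 - (1 - s) ^ (α / 2)) / (α / 2)) ≤ s⁻¹ * (2 / α) := by
          rw [show 2 / α = 1 / (α / 2) by field_simp]
          gcongr
          linarith
      _ ≤ 2 / α * (s⁻¹ * (1 - s ^ 2) ^ (α / 2 - 1)) := by
          rw [mul_comm]; gcongr; exact le_mul_of_one_le_right hs'.le hZ

theorem lintegral_mul_div_mul_schurWeight_le (hα0 : 0 < α) (hα2 : α ≤ 2) {s : ℝ}
    (hs : s ∈ Ioo (0:ℝ) 1) :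
    ∫⁻ r in Ioo s 1, ENNReal.ofReal (r * s / (1 - s ^ 2) * schurWeight α r)
      ≤ ENNReal.ofReal (2 / α * schurWeight α s) := by
  have h2s := one_sub_sq_pos_of_mem_Ioo hs
  refine (setLIntegral_le_of_le_mul_one_sub_sq_rpow (c := s / (1 - s ^ 2)) (γ := α / 2)
    (div_nonneg hs.1.le h2s.le) (by positivity) (by linarith) hs.1.le hs.2.le le_rfl
    fun r hr => le_of_eq ?_).trans ?_
  · have : r ≠ 0 := (hs.1.trans hr.1).ne'
    rw [schurWeight]; generalize (1 - r ^ 2) ^ (α / 2 - 1) = X; field_simp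
  · refine ENNReal.ofReal_le_ofReal ?_
    have hss : s ≤ s⁻¹ := hs.2.le.trans ((one_le_inv₀ hs.1).2 hs.2.le)
    have hY : (1 - s) ^ (α / 2) ≤ (1 - s ^ 2) ^ (α / 2) :=
      Real.rpow_le_rpow (by linarith [hs.2]) (by nlinarith [hs.1, hs.2]) (by positivity)
    rw [sub_self, Real.zero_rpow (by positivity), sub_zero, schurWeight,
      Real.rpow_sub_one h2s.ne']
    calc s / (1 - s ^ 2) * ((1 - s) ^ (α / 2) / (α / 2))
        = 2 / α * (s * (1 - s) ^ (α / 2)) / (1 - s ^ 2) := by field_simp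
      _ ≤ 2 / α * (s⁻¹ * (1 - s ^ 2) ^ (α / 2)) / (1 - s ^ 2) := by
          gcongr 2 / α * ?_ / _
          exact mul_le_mul hss hY (Real.rpow_nonneg (by linarith [hs.2]) _)
            (inv_nonneg.2 hs.1.le)
      _ = 2 / α * (s⁻¹ * ((1 - s ^ 2) ^ (α / 2) / (1 - s ^ 2))) := by ring

theorem lintegral_div_mul_rpow_le (hα0 : 0 ≤ α) (hα1 : α ≤ 1) {r : ℝ} (hr : r ∈ Ioo (0:ℝ) 1) :
    ∫⁻ s in Ioo r 1, ENNReal.ofReal (r / s * (1 - s ^ 2) ^ (-(α / 2)))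
      ≤ ENNReal.ofReal (2 * (1 - r ^ 2) ^ (-(α / 2))) := by
  refine (setLIntegral_le_of_le_mul_one_sub_sq_rpow (c := 1) (γ := 1 - α / 2) zero_le_one
    (by linarith) (by linarith) hr.1.le hr.2.le le_rfl fun s hs => ?_).trans ?_
  · have hs0 : 0 < s := hr.1.trans hs.1
    rw [one_mul, show 1 - α / 2 - 1 = -(α / 2) by ring]
    exact mul_le_of_le_one_left (Real.rpow_nonneg (by nlinarith [hs.2]) _)
      ((div_le_one hs0).2 hs.1.le)
  · refine ENNReal.ofReal_le_ofReal ?_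
    have hX : (1 - r) ^ (1 - α / 2) ≤ 1 :=
      Real.rpow_le_one (by linarith [hr.2]) (by linarith [hr.1]) (by linarith)
    have hZ : 1 ≤ (1 - r ^ 2) ^ (-(α / 2)) :=
      Real.one_le_rpow_of_pos_of_le_one_of_nonpos (one_sub_sq_pos_of_mem_Ioo hr)
        (by nlinarith [hr.1]) (by linarith)
    rw [sub_self, Real.zero_rpow (by linarith), sub_zero, one_mul, div_le_iff₀ (by linarith)]
    nlinarith

theorem lintegral_mul_div_mul_rpow_le (hα0 : 0 < α) {r : ℝ} (hr : r ∈ Ioo (0:ℝ) 1) :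
    ∫⁻ s in Ioo 0 r, ENNReal.ofReal (r * s / (1 - s ^ 2) * (1 - s ^ 2) ^ (-(α / 2)))
      ≤ ENNReal.ofReal (1 / α * (1 - r ^ 2) ^ (-(α / 2))) := by
  have h2 : ∀ x ∈ uIcc 0 r, 0 < 1 - x ^ 2 := fun x hx => by
    rw [uIcc_of_le hr.1.le] at hx; nlinarith [hx.1, hx.2, hr.2]
  have hderiv : ∀ x ∈ uIcc 0 r, HasDerivAt (fun x => (1 - x ^ 2) ^ (-(α / 2)) / α)
      (x * (1 - x ^ 2) ^ (-(α / 2) - 1)) x := fun x hx => by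
    have h := (((hasDerivAt_pow 2 x).const_sub 1).rpow_const
      (p := -(α / 2)) (Or.inl (h2 x hx).ne')).div_const α
    refine h.congr_deriv ?_
    field_simp
    norm_num
  have hint : IntervalIntegrable (fun x => x * (1 - x ^ 2) ^ (-(α / 2) - 1)) volume 0 r :=
    (continuousOn_id.mul ((continuousOn_const.sub (continuousOn_pow 2)).rpow_const
      fun x hx => Or.inl (h2 x hx).ne')).intervalIntegrable
  refine (setLIntegral_Ioo_ofReal_le_intervalIntegral hr.1.le hint (fun s hs => ?_)
    (fun s hs => ?_)).trans ?_
  · have h2s : 0 < 1 - s ^ 2 := one_sub_sq_pos_of_mem_Ioo ⟨hs.1, hs.2.trans hr.2⟩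
    rw [Real.rpow_sub_one h2s.ne', show r * s / (1 - s ^ 2) * (1 - s ^ 2) ^ (-(α / 2))
      = r * (s * ((1 - s ^ 2) ^ (-(α / 2)) / (1 - s ^ 2))) by ring]
    exact mul_le_of_le_one_left
      (mul_nonneg hs.1.le (div_nonneg (Real.rpow_nonneg h2s.le _) h2s.le)) hr.2.le
  · have h2s : 0 < 1 - s ^ 2 := one_sub_sq_pos_of_mem_Ioo ⟨hs.1, hs.2.trans hr.2⟩
    exact mul_nonneg hs.1.le (Real.rpow_nonneg h2s.le _)
  · rw [intervalIntegral.integral_eq_sub_of_hasDerivAt hderiv hint]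
    refine ENNReal.ofReal_le_ofReal ?_
    rw [zero_pow two_ne_zero, sub_zero, Real.one_rpow, one_div_mul_eq_div]
    exact sub_le_self _ (by positivity)

lemma kernel_nonneg {s r : ℝ} (hs : s ∈ Ioo (0:ℝ) 1) (hr : 0 ≤ r) : 0 ≤ kernel s r := by
  unfold kernel
  split_ifs
  · exact div_nonneg hr hs.1.le
  · exact div_nonneg (mul_nonneg hr hs.1.le) (one_sub_sq_pos_of_mem_Ioo hs).le

lemma measurable_ofReal_kernel :
    Measurable (Function.uncurry fun s r => ENNReal.ofReal (kernel s r)) :=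
  (Measurable.ite (measurableSet_lt measurable_snd measurable_fst) (by fun_prop)
    (by fun_prop)).ennreal_ofReal

lemma _root_.Complex.enorm_ofReal_of_nonneg {x : ℝ} (hx : 0 ≤ x) :
    ‖(x : ℂ)‖ₑ = ENNReal.ofReal x := by
  rw [enorm_eq_nnnorm, Complex.nnnorm_real, ← enorm_eq_nnnorm, Real.enorm_eq_ofReal hx]

theorem enorm_T0_le_lintegral_kernel (f : ℝ → ℂ) {s : ℝ} (hs : s ∈ Ioo (0:ℝ) 1) :
    ‖T0 f s‖ₑ ≤ ∫⁻ r in Ioo 0 1, ENNReal.ofReal (kernel s r) * ‖f r‖ₑ := by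
  have h2s : 0 ≤ 1 / (1 - s ^ 2) := one_div_nonneg.2 (one_sub_sq_pos_of_mem_Ioo hs).le
  rw [setLIntegral_Ioo_eq_add hs.1 hs.2.le, T0]
  refine (enorm_add_le _ _).trans (add_le_add ?_ ?_)
  · rw [enorm_neg]
    refine (enorm_integral_le_lintegral_enorm _).trans_eq
      (setLIntegral_congr_fun measurableSet_Ioo fun r hr => ?_)
    rw [enorm_mul, Complex.enorm_ofReal_of_nonneg (div_nonneg hr.1.le hs.1.le), kernel,
      if_pos hr.2]
  · rw [enorm_mul, Complex.enorm_ofReal_of_nonneg h2s]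
    calc ENNReal.ofReal (1 / (1 - s ^ 2)) * ‖∫ r in Ioo s 1, ((r * s : ℝ) : ℂ) * f r‖ₑ
        ≤ ENNReal.ofReal (1 / (1 - s ^ 2)) * ∫⁻ r in Ioo s 1, ‖((r * s : ℝ) : ℂ) * f r‖ₑ := by
          gcongr; exact enorm_integral_le_lintegral_enorm _
      _ = ∫⁻ r in Ioo s 1, ENNReal.ofReal (kernel s r) * ‖f r‖ₑ := by
          rw [← lintegral_const_mul' _ _ ENNReal.ofReal_ne_top]
          refine setLIntegral_congr_fun measurableSet_Ioo fun r hr => ?_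
          have hrs : 0 ≤ r * s := mul_nonneg (hs.1.trans hr.1).le hs.1.le
          rw [enorm_mul, Complex.enorm_ofReal_of_nonneg hrs, kernel, if_neg (not_lt.2 hr.1.le),
            ← mul_assoc, ← ENNReal.ofReal_mul h2s, one_div_mul_eq_div]

lemma schurWeight_pos {r : ℝ} (hr : r ∈ Ioo (0:ℝ) 1) : 0 < schurWeight α r :=
  mul_pos (inv_pos.2 hr.1) (Real.rpow_pos_of_pos (one_sub_sq_pos_of_mem_Ioo hr) _)

lemma schurWeight_mul {r : ℝ} (hr : r ∈ Ioo (0:ℝ) 1) :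
    schurWeight α r * ((1 - r ^ 2) ^ (1 - α) * r) = (1 - r ^ 2) ^ (-(α / 2)) := by
  rw [schurWeight, show r⁻¹ * (1 - r ^ 2) ^ (α / 2 - 1) * ((1 - r ^ 2) ^ (1 - α) * r)
      = (r⁻¹ * r) * ((1 - r ^ 2) ^ (α / 2 - 1) * (1 - r ^ 2) ^ (1 - α)) by ring,
    inv_mul_cancel₀ hr.1.ne', one_mul, ← Real.rpow_add (one_sub_sq_pos_of_mem_Ioo hr)]
  ring_nf

theorem lintegral_kernel_mul_schurWeight_le (hα0 : 0 < α) (hα2 : α ≤ 2) {s : ℝ}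
    (hs : s ∈ Ioo (0:ℝ) 1) :
    ∫⁻ r in Ioo 0 1, ENNReal.ofReal (kernel s r) * ENNReal.ofReal (schurWeight α r)
      ≤ ENNReal.ofReal (4 / α) * ENNReal.ofReal (schurWeight α s) := by
  have hH := (schurWeight_pos (α := α) hs).le
  rw [setLIntegral_Ioo_eq_add hs.1 hs.2.le, ← ENNReal.ofReal_mul (by positivity),
    show 4 / α * schurWeight α s = 2 / α * schurWeight α s + 2 / α * schurWeight α s by ring,
    ENNReal.ofReal_add (by positivity) (by positivity)]
  refine add_le_add (le_of_eq_of_le ?_ (lintegral_div_mul_schurWeight_le hα0 hα2 hs))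
    (le_of_eq_of_le ?_ (lintegral_mul_div_mul_schurWeight_le hα0 hα2 hs)) <;>
    refine setLIntegral_congr_fun measurableSet_Ioo fun r hr => ?_
  · rw [← ENNReal.ofReal_mul (kernel_nonneg hs hr.1.le), kernel, if_pos hr.2]
  · rw [← ENNReal.ofReal_mul (kernel_nonneg hs (hs.1.trans hr.1).le), kernel,
      if_neg (not_lt.2 hr.1.le)]

theorem lintegral_kernel_mul_schurWeight_mul_le (hα0 : 0 < α) (hα1 : α ≤ 1) {r : ℝ}
    (hr : r ∈ Ioo (0:ℝ) 1) :
    ∫⁻ s in Ioo 0 1, ENNReal.ofReal (kernel s r)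
        * (ENNReal.ofReal (schurWeight α s) * ENNReal.ofReal ((1 - s ^ 2) ^ (1 - α) * s))
      ≤ ENNReal.ofReal (3 / α)
        * (ENNReal.ofReal (schurWeight α r) * ENNReal.ofReal ((1 - r ^ 2) ^ (1 - α) * r)) := by
  have hG : ∀ x ∈ Ioo (0:ℝ) 1, ENNReal.ofReal (schurWeight α x)
      * ENNReal.ofReal ((1 - x ^ 2) ^ (1 - α) * x) = ENNReal.ofReal ((1 - x ^ 2) ^ (-(α / 2))) :=
    fun x hx => by rw [← ENNReal.ofReal_mul (schurWeight_pos hx).le, schurWeight_mul hx]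
  have hGr : 0 ≤ (1 - r ^ 2) ^ (-(α / 2)) :=
    Real.rpow_nonneg (one_sub_sq_pos_of_mem_Ioo hr).le _
  rw [hG r hr, setLIntegral_Ioo_eq_add hr.1 hr.2.le, ← ENNReal.ofReal_mul (by positivity)]
  calc _ ≤ ENNReal.ofReal (1 / α * (1 - r ^ 2) ^ (-(α / 2)))
        + ENNReal.ofReal (2 * (1 - r ^ 2) ^ (-(α / 2))) := by
        refine add_le_add (le_of_eq_of_le ?_ (lintegral_mul_div_mul_rpow_le hα0 hr))
          (le_of_eq_of_le ?_ (lintegral_div_mul_rpow_le hα0.le hα1 hr)) <;>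
          refine setLIntegral_congr_fun measurableSet_Ioo fun s hs => ?_
        · have hs' : s ∈ Ioo (0:ℝ) 1 := ⟨hs.1, hs.2.trans hr.2⟩
          rw [hG s hs', ← ENNReal.ofReal_mul (kernel_nonneg hs' hr.1.le), kernel,
            if_neg (not_lt.2 hs.2.le)]
        · have hs' : s ∈ Ioo (0:ℝ) 1 := ⟨hr.1.trans hs.1, hs.2⟩
          rw [hG s hs', ← ENNReal.ofReal_mul (kernel_nonneg hs' hr.1.le), kernel, if_pos hs.1]
    _ ≤ ENNReal.ofReal (3 / α * (1 - r ^ 2) ^ (-(α / 2))) := by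
        rw [← ENNReal.ofReal_add (by positivity) (by positivity), ← add_mul]
        refine ENNReal.ofReal_le_ofReal (mul_le_mul_of_nonneg_right ?_ hGr)
        rw [div_add' _ _ _ hα0.ne', div_le_div_iff_of_pos_right hα0]
        linarith

end T0

theorem stmt10_general (α : ℝ) (hα0 : 0 < α) (hα1 : α < 1) (f : ℝ → ℂ) (hf : Measurable f) :
    ∫⁻ s in Ioo (0:ℝ) 1,
        (‖T0 f s‖₊ : ℝ≥0∞)^2 * ENNReal.ofReal ((1 - s^2) ^ (1 - α) * s)
      ≤ ENNReal.ofReal ((5 / α^2)^2) *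
        ∫⁻ r in Ioo (0:ℝ) 1,
          (‖f r‖₊ : ℝ≥0∞)^2 * ENNReal.ofReal ((1 - r^2) ^ (1 - α) * r) := by
  have hH : Measurable fun r => ENNReal.ofReal (T0.schurWeight α r) := by
    unfold T0.schurWeight; fun_prop
  calc _ ≤ ∫⁻ s in Ioo (0:ℝ) 1, (∫⁻ r in Ioo 0 1, ENNReal.ofReal (T0.kernel s r) * ‖f r‖ₑ) ^ 2
          * ENNReal.ofReal ((1 - s ^ 2) ^ (1 - α) * s) :=
        setLIntegral_mono' measurableSet_Ioo fun s hs => by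
          gcongr; exact T0.enorm_T0_le_lintegral_kernel f hs
    _ ≤ ENNReal.ofReal (4 / α) * ENNReal.ofReal (3 / α) * ∫⁻ r in Ioo (0:ℝ) 1,
          ‖f r‖ₑ ^ 2 * ENNReal.ofReal ((1 - r ^ 2) ^ (1 - α) * r) := by
        refine lintegral_sq_lintegral_kernel_le_of_schur T0.measurable_ofReal_kernel hf.enorm hH
          (by fun_prop) hH (by fun_prop) ?_ ?_ ?_ <;> rw [ae_restrict_iff' measurableSet_Ioo] <;>
          refine ae_of_all _ fun x hx => ?_
        · exact ⟨(ENNReal.ofReal_pos.2 (T0.schurWeight_pos hx)).ne', ENNReal.ofReal_ne_top⟩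
        · exact T0.lintegral_kernel_mul_schurWeight_le hα0 (by linarith) hx
        · exact T0.lintegral_kernel_mul_schurWeight_mul_le hα0 hα1.le hx
    _ ≤ _ := by
        rw [← ENNReal.ofReal_mul (by positivity)]
        gcongr ENNReal.ofReal ?_ * _
        rw [div_mul_div_comm, div_pow, ← pow_mul, show α ^ (2 * 2) = α ^ 2 * α ^ 2 by ring,
          div_le_div_iff₀ (by positivity) (by positivity)]
        have hα2 : α ^ 2 ≤ 1 := pow_le_one₀ hα0.le hα1.le
        nlinarith [mul_le_mul_of_nonneg_left hα2 (sq_nonneg α)]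

theorem stmt10 (α : ℝ) (hα0 : 0 < α) (hα1 : α < 1) (f : ℝ → ℂ) (hf : Measurable f)
    (hf2 : (∫⁻ r in Ioo (0:ℝ) 1,
        (‖f r‖₊ : ℝ≥0∞)^2 * ENNReal.ofReal ((1 - r^2) ^ (1 - α) * r)) < ⊤) :
    ∫⁻ s in Ioo (0:ℝ) 1,
        (‖T0 f s‖₊ : ℝ≥0∞)^2 * ENNReal.ofReal ((1 - s^2) ^ (1 - α) * s)
      ≤ ENNReal.ofReal ((5 / α^2)^2) *
        ∫⁻ r in Ioo (0:ℝ) 1,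
          (‖f r‖₊ : ℝ≥0∞)^2 * ENNReal.ofReal ((1 - r^2) ^ (1 - α) * r) :=
  stmt10_general α hα0 hα1 f hf
end

section
/- Let 0 < α < 1, let l ≥ 2 be an integer, and let v ∈ (0,1). Then ∫₀^v (l − 1)² u^{1−l} (1 − u)^{α−1} ( ∫₀^u s^{2l−3} (1 − s)^{1−α} ds ) du ≤ (2/α) v^l. -/
open MeasureTheory Real Set

/-!
Work with a real exponent `L ≥ 2` in place of `l` and split at `v = 1 - 1/L`.

If `L (1 - v) ≤ 1`, swap the order of integration, bound `u ^ (1 - L) ≤ s ^ (1 - L)` and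
`∫_s^v (1 - u) ^ (α - 1) du ≤ (1 - s) ^ α / α`; the `(1 - s)`-powers then cancel and what remains
is `(L - 1)² / α · ∫_0^v s ^ (L - 2) (1 - s) ds`, which is at most `2 v ^ L / α` precisely because
`L (L - 1) ≤ v (L² + 1)` in this range.

If `L (1 - v) > 1`, weighted AM-GM gives
`(1 - u) ^ (α - 1) (1 - s) ^ (1 - α) ≤ α + B (1 - s)` with `B = (1 - α) / (1 - v) < L (1 - α)`,
after which both integrals are explicit; the large factor `B` is offset by the cancellation in
`∫_0^u s ^ (2L - 3) (1 - s) ds`.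
-/

theorem setLIntegral_Ioo_ofReal_eq_intervalIntegral {f : ℝ → ℝ} {a b : ℝ} (hab : a ≤ b)
    (hf : IntervalIntegrable f volume a b) (hf0 : ∀ x ∈ Ioc a b, 0 ≤ f x) :
    ∫⁻ x in Ioo a b, ENNReal.ofReal (f x) = ENNReal.ofReal (∫ x in a..b, f x) := by
  rw [setLIntegral_congr Ioo_ae_eq_Ioc, intervalIntegral.integral_of_le hab,
    ofReal_integral_eq_lintegral_ofReal hf.1
      ((ae_restrict_iff' measurableSet_Ioc).2 (ae_of_all _ hf0))]

theorem setLIntegral_Ioo_rpow_mul_sub {p a b c : ℝ} (hp : -1 < p) (hc : 0 ≤ c) (hb : 0 ≤ b)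
    (hbc : b * c ≤ a) :
    ∫⁻ x in Ioo 0 c, ENNReal.ofReal (x ^ p * (a - b * x)) =
      ENNReal.ofReal (c ^ (p + 1) * (a / (p + 1) - b * c / (p + 2))) := by
  have hint : IntervalIntegrable (fun x : ℝ => x ^ p) volume 0 c :=
    intervalIntegral.intervalIntegrable_rpow' hp
  rw [setLIntegral_Ioo_ofReal_eq_intervalIntegral hc (hint.mul_continuousOn (by fun_prop))
    (fun x hx => mul_nonneg (rpow_nonneg hx.1.le _) (by nlinarith [hx.2]))]
  have hsplit : ∀ x ∈ uIcc 0 c, x ^ p * (a - b * x) = a * x ^ p - b * x ^ (p + 1) := by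
    intro x hx
    rw [uIcc_of_le hc] at hx
    rw [rpow_add_one' hx.1 (by linarith)]
    ring
  rw [intervalIntegral.integral_congr hsplit, intervalIntegral.integral_sub (hint.const_mul a)
      ((intervalIntegral.intervalIntegrable_rpow' (by linarith)).const_mul b),
    intervalIntegral.integral_const_mul, intervalIntegral.integral_const_mul,
    integral_rpow (Or.inl hp), integral_rpow (Or.inl (by linarith)),
    zero_rpow (by linarith), zero_rpow (by linarith), rpow_add_one' (y := p + 1) hc (by linarith)]
  have : p + 1 ≠ 0 := by linarith
  have : p + 2 ≠ 0 := by linarith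
  rw [show p + 1 + 1 = p + 2 by ring]
  congr 1
  field_simp
  ring

theorem setLIntegral_Ioo_one_sub_rpow {a s : ℝ} (ha : 0 < a) (hs : s ≤ 1) :
    ∫⁻ u in Ioo s 1, ENNReal.ofReal ((1 - u) ^ (a - 1)) = ENNReal.ofReal ((1 - s) ^ a / a) := by
  have hint : IntervalIntegrable (fun u : ℝ => (1 - u) ^ (a - 1)) volume s 1 := by
    simpa using ((intervalIntegral.intervalIntegrable_rpow' (by linarith) :
      IntervalIntegrable (fun x : ℝ => x ^ (a - 1)) volume (1 - s) 0).comp_sub_left 1)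
  rw [setLIntegral_Ioo_ofReal_eq_intervalIntegral hs hint
      (fun u hu => rpow_nonneg (by linarith [hu.2]) _),
    intervalIntegral.integral_comp_sub_left (fun x => x ^ (a - 1)),
    integral_rpow (Or.inl (by linarith))]
  simp [ha.ne']

theorem setLIntegral_Ioo_mul_setLIntegral_Ioo_swap {f g : ℝ → ENNReal} (hf : Measurable f)
    (hg : Measurable g) (a b : ℝ) :
    ∫⁻ u in Ioo a b, f u * ∫⁻ s in Ioo a u, g s = ∫⁻ s in Ioo a b, g s * ∫⁻ u in Ioo s b, f u := by
  set H : ℝ → ℝ → ENNReal := fun u s =>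
    {p : ℝ × ℝ | p.2 < p.1}.indicator (fun p => f p.1 * g p.2) (u, s)
  have hH : Measurable (Function.uncurry H) :=
    ((hf.comp measurable_fst).mul (hg.comp measurable_snd)).indicator
      (measurableSet_lt measurable_snd measurable_fst)
  calc ∫⁻ u in Ioo a b, f u * ∫⁻ s in Ioo a u, g s = ∫⁻ u in Ioo a b, ∫⁻ s in Ioo a b, H u s := by
        refine setLIntegral_congr_fun measurableSet_Ioo fun u hu => ?_
        have : H u = (Iio u).indicator fun s => f u * g s := by
          ext s; simp [H, indicator_apply]
        rw [this, lintegral_indicator measurableSet_Iio,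
          Measure.restrict_restrict measurableSet_Iio,
          inter_comm, Ioo_inter_Iio, min_eq_right hu.2.le, lintegral_const_mul _ hg]
    _ = ∫⁻ s in Ioo a b, ∫⁻ u in Ioo a b, H u s := lintegral_lintegral_swap hH.aemeasurable
    _ = ∫⁻ s in Ioo a b, g s * ∫⁻ u in Ioo s b, f u := by
        refine setLIntegral_congr_fun measurableSet_Ioo fun s hs => ?_
        have : (fun u => H u s) = (Ioi s).indicator fun u => g s * f u := by
          ext u; simp [H, indicator_apply, mul_comm]
        rw [this, lintegral_indicator measurableSet_Ioi,
          Measure.restrict_restrict measurableSet_Ioi,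
          inter_comm, Ioo_inter_Ioi, max_eq_right hs.1.le, lintegral_const_mul _ hf]

theorem rpow_sub_one_mul_rpow_one_sub_le {α x y : ℝ} (hα0 : 0 ≤ α) (hα1 : α ≤ 1) (hx : 0 < x)
    (hy : 0 ≤ y) : x ^ (α - 1) * y ^ (1 - α) ≤ α + (1 - α) * (y / x) := by
  have hratio : x ^ (α - 1) * y ^ (1 - α) = (1 + (y / x - 1)) ^ (1 - α) := by
    rw [add_sub_cancel, div_rpow hy hx.le, show α - 1 = -(1 - α) by ring, rpow_neg hx.le]
    ring
  have := rpow_one_add_le_one_add_mul_self (s := y / x - 1) (by linarith [div_nonneg hy hx.le])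
    (p := 1 - α) (by linarith) (by linarith)
  rw [hratio]
  linarith

theorem mul_setLIntegral_Ioo_le {α L s v : ℝ} (hα : 0 < α) (hL : 1 ≤ L) (hs0 : 0 < s)
    (hs1 : s < 1) (hv1 : v ≤ 1) :
    ENNReal.ofReal (s ^ (2 * L - 3) * (1 - s) ^ (1 - α)) *
        ∫⁻ u in Ioo s v, ENNReal.ofReal ((L - 1) ^ 2 * u ^ (1 - L) * (1 - u) ^ (α - 1))
      ≤ ENNReal.ofReal (s ^ (L - 2) * ((L - 1) ^ 2 / α - (L - 1) ^ 2 / α * s)) := by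
  have hK : 0 ≤ (L - 1) ^ 2 * s ^ (1 - L) := by positivity
  have hinner : ∫⁻ u in Ioo s v, ENNReal.ofReal ((L - 1) ^ 2 * u ^ (1 - L) * (1 - u) ^ (α - 1))
      ≤ ENNReal.ofReal ((L - 1) ^ 2 * s ^ (1 - L)) * ENNReal.ofReal ((1 - s) ^ α / α) := calc
    _ ≤ ∫⁻ u in Ioo s v, ENNReal.ofReal ((L - 1) ^ 2 * s ^ (1 - L)) *
          ENNReal.ofReal ((1 - u) ^ (α - 1)) := by
        refine setLIntegral_mono' measurableSet_Ioo fun u hu => ?_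
        rw [← ENNReal.ofReal_mul hK]
        refine ENNReal.ofReal_le_ofReal (mul_le_mul_of_nonneg_right ?_ (rpow_nonneg ?_ _))
        · exact mul_le_mul_of_nonneg_left (rpow_le_rpow_of_nonpos hs0 hu.1.le (by linarith))
            (sq_nonneg _)
        · linarith [hu.2]
    _ ≤ ENNReal.ofReal ((L - 1) ^ 2 * s ^ (1 - L)) *
          ∫⁻ u in Ioo s 1, ENNReal.ofReal ((1 - u) ^ (α - 1)) := by
        rw [lintegral_const_mul' _ _ ENNReal.ofReal_ne_top]
        exact mul_le_mul_right (lintegral_mono_set (Ioo_subset_Ioo_right hv1)) _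
    _ = _ := by rw [setLIntegral_Ioo_one_sub_rpow hα hs1.le]
  have hpow : s ^ (2 * L - 3) * s ^ (1 - L) = s ^ (L - 2) := by
    rw [← rpow_add hs0]; ring_nf
  have hone : (1 - s) ^ (1 - α) * (1 - s) ^ α = 1 - s := by
    rw [← rpow_add (by linarith)]; simp
  calc _ ≤ ENNReal.ofReal (s ^ (2 * L - 3) * (1 - s) ^ (1 - α)) *
        (ENNReal.ofReal ((L - 1) ^ 2 * s ^ (1 - L)) * ENNReal.ofReal ((1 - s) ^ α / α)) := by
        gcongr
    _ = ENNReal.ofReal ((L - 1) ^ 2 / α * (s ^ (2 * L - 3) * s ^ (1 - L)) *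
          ((1 - s) ^ (1 - α) * (1 - s) ^ α)) := by
        rw [← ENNReal.ofReal_mul hK, ← ENNReal.ofReal_mul (by positivity)]
        ring_nf
    _ = _ := by rw [hpow, hone]; ring_nf

theorem lintegral_le_of_mul_one_sub_le_one {α L v : ℝ} (hα : 0 < α) (hL : 2 ≤ L) (hv1 : v < 1)
    (hLv : L * (1 - v) ≤ 1) :
    ∫⁻ u in Ioo 0 v, ENNReal.ofReal ((L - 1) ^ 2 * u ^ (1 - L) * (1 - u) ^ (α - 1)) *
        ∫⁻ s in Ioo 0 u, ENNReal.ofReal (s ^ (2 * L - 3) * (1 - s) ^ (1 - α))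
      ≤ ENNReal.ofReal (2 / α * v ^ L) := by
  have hv0 : 0 < v := by nlinarith
  set C := (L - 1) ^ 2 / α
  have hC : 0 ≤ C := by positivity
  have hcoef : C / (L - 1) - C * v / L ≤ 2 / α * v := by
    have hL1 : L - 1 ≠ 0 := by linarith
    have hL0 : L ≠ 0 := by linarith
    rw [show C / (L - 1) - C * v / L = ((L - 1) * L - (L - 1) ^ 2 * v) / L / α by
        simp only [C]; field_simp,
      div_mul_eq_mul_div, div_le_div_iff_of_pos_right hα, div_le_iff₀ (by linarith)]
    nlinarith
  calc _ = ∫⁻ s in Ioo 0 v, ENNReal.ofReal (s ^ (2 * L - 3) * (1 - s) ^ (1 - α)) *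
          ∫⁻ u in Ioo s v, ENNReal.ofReal ((L - 1) ^ 2 * u ^ (1 - L) * (1 - u) ^ (α - 1)) :=
        setLIntegral_Ioo_mul_setLIntegral_Ioo_swap (by fun_prop) (by fun_prop) 0 v
    _ ≤ ∫⁻ s in Ioo 0 v, ENNReal.ofReal (s ^ (L - 2) * (C - C * s)) :=
        setLIntegral_mono' measurableSet_Ioo fun s hs =>
          mul_setLIntegral_Ioo_le hα (by linarith) hs.1 (hs.2.trans hv1) hv1.le
    _ = ENNReal.ofReal (v ^ (L - 2 + 1) * (C / (L - 2 + 1) - C * v / (L - 2 + 2))) :=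
        setLIntegral_Ioo_rpow_mul_sub (by linarith) hv0.le hC (by nlinarith)
    _ ≤ ENNReal.ofReal (2 / α * v ^ L) := by
        refine ENNReal.ofReal_le_ofReal ?_
        rw [show L - 2 + 1 = L - 1 by ring, show L - 2 + 2 = L by ring,
          show v ^ L = v ^ (L - 1) * v by rw [← rpow_add_one hv0.ne']; ring_nf]
        nlinarith [rpow_nonneg hv0.le (L - 1)]

theorem mul_setLIntegral_Ioo_le_of_le_mul {α L B u : ℝ} (hα0 : 0 ≤ α) (hα1 : α ≤ 1) (hL : 1 < L)
    (hu0 : 0 < u) (hu1 : u < 1) (hB : 1 - α ≤ B * (1 - u)) :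
    ENNReal.ofReal ((L - 1) ^ 2 * u ^ (1 - L) * (1 - u) ^ (α - 1)) *
        ∫⁻ s in Ioo 0 u, ENNReal.ofReal (s ^ (2 * L - 3) * (1 - s) ^ (1 - α))
      ≤ ENNReal.ofReal
          (u ^ (L - 1) * ((L - 1) * (B + α) / 2 - (L - 1) ^ 2 * B / (2 * L - 1) * u)) := by
  have hB0 : 0 ≤ B := nonneg_of_mul_nonneg_left (b := 1 - u) (by linarith) (by linarith)
  have hK : 0 ≤ (L - 1) ^ 2 * u ^ (1 - L) := by positivity
  have hpoint : ∀ s ∈ Ioo 0 u, (L - 1) ^ 2 * u ^ (1 - L) * (1 - u) ^ (α - 1) *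
      (s ^ (2 * L - 3) * (1 - s) ^ (1 - α))
        ≤ (L - 1) ^ 2 * u ^ (1 - L) * (s ^ (2 * L - 3) * (B + α - B * s)) := by
    rintro s ⟨hs0, hsu⟩
    have hmean := rpow_sub_one_mul_rpow_one_sub_le hα0 hα1 (x := 1 - u) (y := 1 - s)
      (by linarith) (by linarith)
    have hratio : (1 - α) * ((1 - s) / (1 - u)) ≤ B * (1 - s) := by
      rw [mul_div_assoc', div_le_iff₀ (by linarith)]
      nlinarith
    calc _ = (L - 1) ^ 2 * u ^ (1 - L) * s ^ (2 * L - 3) *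
          ((1 - u) ^ (α - 1) * (1 - s) ^ (1 - α)) := by ring
      _ ≤ (L - 1) ^ 2 * u ^ (1 - L) * s ^ (2 * L - 3) * (α + B * (1 - s)) := by
          gcongr; linarith
      _ = _ := by ring
  have hpow : u ^ (1 - L) * u ^ (2 * L - 3 + 1) = u ^ (L - 1) := by
    rw [← rpow_add hu0]; ring_nf
  have : L - 1 ≠ 0 := by linarith
  have : L * 2 - 1 ≠ 0 := by linarith
  calc _ = ∫⁻ s in Ioo 0 u, ENNReal.ofReal ((L - 1) ^ 2 * u ^ (1 - L) * (1 - u) ^ (α - 1) *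
        (s ^ (2 * L - 3) * (1 - s) ^ (1 - α))) := by
        rw [← lintegral_const_mul' _ _ ENNReal.ofReal_ne_top]
        refine setLIntegral_congr_fun measurableSet_Ioo fun s _ => ?_
        rw [← ENNReal.ofReal_mul (mul_nonneg hK (rpow_nonneg (by linarith) _))]
    _ ≤ ∫⁻ s in Ioo 0 u, ENNReal.ofReal ((L - 1) ^ 2 * u ^ (1 - L)) *
          ENNReal.ofReal (s ^ (2 * L - 3) * (B + α - B * s)) := by
        refine setLIntegral_mono' measurableSet_Ioo fun s hs => ?_
        rw [← ENNReal.ofReal_mul hK]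
        exact ENNReal.ofReal_le_ofReal (hpoint s hs)
    _ = ENNReal.ofReal ((L - 1) ^ 2 * (u ^ (1 - L) * u ^ (2 * L - 3 + 1)) *
          ((B + α) / (2 * L - 3 + 1) - B * u / (2 * L - 3 + 2))) := by
        rw [lintegral_const_mul' _ _ ENNReal.ofReal_ne_top,
          setLIntegral_Ioo_rpow_mul_sub (by linarith) hu0.le hB0 (by nlinarith),
          ← ENNReal.ofReal_mul hK]
        ring_nf
    _ = _ := by
        rw [hpow, show 2 * L - 3 + 1 = 2 * (L - 1) by ring, show 2 * L - 3 + 2 = 2 * L - 1 by ring]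
        congr 1
        field_simp

/-- After `B v = B - (1 - α)` the coefficient of `B` is `(L - 1)(3L - 1) / (2L (2L - 1)(L + 1))`,
so `B ≤ L (1 - α)` keeps the left-hand side below `5 / 4`. -/
theorem coeff_le_two_div {α L B v : ℝ} (hα0 : 0 < α) (hα1 : α < 1) (hL : 2 ≤ L)
    (hBv : B * (1 - v) = 1 - α) (hBL : B ≤ L * (1 - α)) :
    (L - 1) * (B + α) / 2 / L - (L - 1) ^ 2 * B / (2 * L - 1) * v / (L + 1) ≤ 2 / α := by
  have h2 : 2 ≤ 2 / α := by rw [le_div_iff₀ hα0]; nlinarith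
  refine le_trans ?_ h2
  have hL1 : 0 ≤ L - 1 := by linarith
  have hL2 : 0 < 2 * L - 1 := by linarith
  have hL3 : 0 ≤ 3 * L - 1 := by linarith
  have : L * 2 - 1 ≠ 0 := by linarith
  have : L ≠ 0 := by linarith
  have : L + 1 ≠ 0 := by linarith
  have hBv' : B * v = B - (1 - α) := by linarith
  rw [show (L - 1) * (B + α) / 2 / L - (L - 1) ^ 2 * B / (2 * L - 1) * v / (L + 1)
      = (L - 1) * ((B + α) * (2 * L - 1) * (L + 1) - 2 * L * (L - 1) * (B * v)) /
        (2 * L * (2 * L - 1) * (L + 1)) by field_simp,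
    hBv', div_le_iff₀ (by positivity)]
  nlinarith [mul_le_mul_of_nonneg_left hBL (mul_nonneg hL1 hL3),
    mul_nonneg hα0.le (mul_nonneg (mul_nonneg hL1 hL1) hL3), mul_nonneg (mul_nonneg hL1 hL1) hL1]

theorem lintegral_le_of_one_lt_mul_one_sub {α L v : ℝ} (hα0 : 0 < α) (hα1 : α < 1) (hL : 2 ≤ L)
    (hv0 : 0 < v) (hLv : 1 < L * (1 - v)) :
    ∫⁻ u in Ioo 0 v, ENNReal.ofReal ((L - 1) ^ 2 * u ^ (1 - L) * (1 - u) ^ (α - 1)) *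
        ∫⁻ s in Ioo 0 u, ENNReal.ofReal (s ^ (2 * L - 3) * (1 - s) ^ (1 - α))
      ≤ ENNReal.ofReal (2 / α * v ^ L) := by
  have hv1 : v < 1 := by nlinarith
  set B := (1 - α) / (1 - v)
  have hB : 0 ≤ B := div_nonneg (by linarith) (by linarith)
  have hBv : B * (1 - v) = 1 - α := div_mul_cancel₀ _ (by linarith)
  set a := (L - 1) * (B + α) / 2
  set b := (L - 1) ^ 2 * B / (2 * L - 1)
  have hb : 0 ≤ b := div_nonneg (by positivity) (by linarith)
  have hba : b ≤ a := by
    rw [div_le_div_iff₀ (by linarith) two_pos]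
    nlinarith [mul_nonneg (by linarith : (0:ℝ) ≤ L - 1) hB]
  calc _ ≤ ∫⁻ u in Ioo 0 v, ENNReal.ofReal (u ^ (L - 1) * (a - b * u)) :=
        setLIntegral_mono' measurableSet_Ioo fun u hu =>
          mul_setLIntegral_Ioo_le_of_le_mul hα0.le hα1.le (by linarith) hu.1 (hu.2.trans hv1)
            (by nlinarith [hu.2])
    _ = ENNReal.ofReal (v ^ (L - 1 + 1) * (a / (L - 1 + 1) - b * v / (L - 1 + 2))) :=
        setLIntegral_Ioo_rpow_mul_sub (by linarith) hv0.le hb (by nlinarith)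
    _ ≤ ENNReal.ofReal (2 / α * v ^ L) := by
        refine ENNReal.ofReal_le_ofReal ?_
        rw [show L - 1 + 1 = L by ring, show L - 1 + 2 = L + 1 by ring, mul_comm (2 / α)]
        exact mul_le_mul_of_nonneg_left (coeff_le_two_div hα0 hα1 hL hBv (by nlinarith))
          (rpow_nonneg hv0.le _)

theorem stmt15 (α : ℝ) (hα0 : 0 < α) (hα1 : α < 1) (l : ℕ) (hl : 2 ≤ l)
    (v : ℝ) (hv : v ∈ Ioo (0:ℝ) 1) :
    ∫⁻ u in Ioo (0:ℝ) v,
        ENNReal.ofReal (((l : ℝ) - 1)^2 * u ^ ((1:ℝ) - l) * (1 - u) ^ (α - 1)) *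
          ∫⁻ s in Ioo (0:ℝ) u, ENNReal.ofReal (s ^ (2 * (l:ℝ) - 3) * (1 - s) ^ (1 - α))
      ≤ ENNReal.ofReal ((2 / α) * v ^ l) := by
  have hL : (2 : ℝ) ≤ l := by exact_mod_cast hl
  rw [← rpow_natCast v l]
  rcases le_or_gt ((l : ℝ) * (1 - v)) 1 with hLv | hLv
  · exact lintegral_le_of_mul_one_sub_le_one hα0 hL hv.2 hLv
  · exact lintegral_le_of_one_lt_mul_one_sub hα0 hα1 hL hv.1 hLv
end

section
/- Let g : [0,1] → ℂ be continuous and let f : 𝔻 → ℂ be the radial function f(u) = g(|u|) on the open unit disk 𝔻. Then for every w ∈ 𝔻 with w ≠ 0, the Cauchy transform satisfies f̂(w) := −(1/π) ∫_𝔻 f(z)/(z − w) dA(z) = (2/w) ∫₀^{|w|} g(r) r dr. -/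
/-!
In polar coordinates an area integral over a disc centred at `0` becomes `∫₀^R 2πr · A(r) dr`,
where `A(r)` is the average over the circle `|z| = r`. For the radial integrand `g(|z|)/(z - w)`
that average is `g(r)` times the circle average of `(z - w)⁻¹`, which equals `-1/w` for `r < |w|`
(mean value property of a function holomorphic on the closed disc) and `0` for `r > |w|` (by the
Cauchy formula `z/(z - w) = 1 + w/(z - w)` has average `1`). So only the radii `r < |w|` count.
-/

open MeasureTheory Real Set Metric

theorem integrableOn_inv_norm_sub_ball {E : Type*} [NormedAddCommGroup E] [NormedSpace ℝ E]
    [FiniteDimensional ℝ E] [MeasurableSpace E] [BorelSpace E] {μ : Measure E}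
    [μ.IsAddHaarMeasure] (hE : 1 < Module.finrank ℝ E) (w : E) (R : ℝ) :
    IntegrableOn (fun z ↦ ‖z - w‖⁻¹) (ball w R) μ := by
  have h₀ : IntegrableOn (fun z : E ↦ ‖z‖⁻¹) (ball 0 R) μ :=
    integrableOn_ball_of_norm_le_rpow (C := 1) (α := 1) hE.le (by exact_mod_cast hE)
      (ae_of_all _ fun z ↦ by simp [Real.rpow_neg_one])
      (continuous_norm.measurable.inv.aestronglyMeasurable)
  rw [← (measurePreserving_sub_right μ w).integrableOn_comp_preimage
    (measurableEmbedding_subRight w)] at h₀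
  have hball : (fun z ↦ z - w) ⁻¹' ball 0 R = ball w R := by
    ext z; simp [dist_eq_norm]
  simpa [Function.comp_def, hball] using h₀

section PolarCoord

variable {E : Type*} [NormedAddCommGroup E] [NormedSpace ℝ E]

theorem integrable_iff_integrableOn_polarCoord_symm (f : ℝ × ℝ → E) :
    Integrable f ↔ IntegrableOn (fun p ↦ p.1 • f (polarCoord.symm p)) polarCoord.target := by
  have hchange := integrableOn_image_iff_integrableOn_abs_det_fderiv_smul volume
    polarCoord.open_target.measurableSet
    (fun p _ ↦ (hasFDerivAt_polarCoord_symm p).hasFDerivWithinAt) polarCoord.symm.injOn f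
  rw [polarCoord.symm_image_target_eq_source, IntegrableOn,
    Measure.restrict_congr_set polarCoord_source_ae_eq_univ, Measure.restrict_univ] at hchange
  rw [hchange]
  refine integrableOn_congr_fun (fun p hp ↦ ?_) polarCoord.open_target.measurableSet
  rw [det_fderivPolarCoordSymm, abs_of_pos hp.1]

theorem Complex.integrable_iff_integrableOn_polarCoord_symm (f : ℂ → E) :
    Integrable f ↔
      IntegrableOn (fun p ↦ p.1 • f (Complex.polarCoord.symm p)) polarCoord.target := by
  rw [← (Complex.volume_preserving_equiv_real_prod.symm).integrable_comp_emb
    Complex.measurableEquivRealProd.symm.measurableEmbedding,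
    _root_.integrable_iff_integrableOn_polarCoord_symm]
  rfl

theorem Complex.polarCoord_symm_eq_circleMap (p : ℝ × ℝ) :
    Complex.polarCoord.symm p = circleMap 0 p.1 p.2 := by
  simp [circleMap, Complex.exp_mul_I]

theorem integral_Ioo_circleMap_eq_two_pi_smul_circleAverage [CompleteSpace E] (f : ℂ → E)
    (c : ℂ) (r : ℝ) :
    ∫ θ in Ioo (-π) π, f (circleMap c r θ) = (2 * π) • circleAverage f c r := by
  have hperiodic : Function.Periodic (fun θ ↦ f (circleMap c r θ)) (2 * π) :=
    fun θ ↦ by simp [periodic_circleMap c r θ]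
  have hshift := hperiodic.intervalIntegral_add_eq (-π) 0
  rw [show -π + 2 * π = π by ring, zero_add] at hshift
  rw [circleAverage_def, smul_inv_smul₀ (by positivity), ← hshift,
    intervalIntegral.integral_of_le (by linarith [pi_pos]), integral_Ioc_eq_integral_Ioo]

theorem integral_eq_integral_Ioi_mul_circleAverage [CompleteSpace E] {f : ℂ → E}
    (hf : Integrable f) :
    ∫ z, f z = ∫ r in Ioi 0, (2 * π * r) • circleAverage f 0 r := by
  have hpolar := (Complex.integrable_iff_integrableOn_polarCoord_symm f).1 hf
  rw [polarCoord_target, Measure.volume_eq_prod] at hpolar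
  rw [← Complex.integral_comp_polarCoord_symm, polarCoord_target, Measure.volume_eq_prod,
    setIntegral_prod _ hpolar]
  refine setIntegral_congr_fun measurableSet_Ioi fun r _ ↦ ?_
  simp only [Complex.polarCoord_symm_eq_circleMap]
  rw [integral_smul, integral_Ioo_circleMap_eq_two_pi_smul_circleAverage, smul_smul, mul_comm r]

theorem setIntegral_ball_eq_intervalIntegral_mul_circleAverage [CompleteSpace E] {f : ℂ → E}
    {R : ℝ} (hR : 0 ≤ R) (hf : IntegrableOn f (ball 0 R)) :
    ∫ z in ball 0 R, f z = ∫ r in 0..R, (2 * π * r) • circleAverage f 0 r := by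
  rw [← integral_indicator measurableSet_ball,
    integral_eq_integral_Ioi_mul_circleAverage (hf.integrable_indicator measurableSet_ball),
    intervalIntegral.integral_of_le hR, integral_Ioc_eq_integral_Ioo,
    setIntegral_eq_of_subset_of_forall_sdiff_eq_zero measurableSet_Ioi Ioo_subset_Ioi_self]
  · refine setIntegral_congr_fun measurableSet_Ioo fun r hr ↦ ?_
    congr 1
    refine circleAverage_congr_sphere fun z hz ↦ indicator_of_mem ?_ f
    rw [mem_sphere_zero_iff_norm, abs_of_pos hr.1] at hz
    rw [mem_ball_zero_iff, hz]
    exact hr.2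
  · rintro r ⟨hr₀, hrR⟩
    have hRr : R ≤ r := le_of_not_gt fun h ↦ hrR ⟨hr₀, h⟩
    rw [circleAverage_const_on_circle (a := 0), smul_zero]
    intro z hz
    refine indicator_of_notMem (fun hzR ↦ ?_) f
    rw [mem_sphere_zero_iff_norm, abs_of_pos hr₀] at hz
    rw [mem_ball_zero_iff, hz] at hzR
    exact hzR.not_ge hRr

end PolarCoord

theorem circleAverage_sub_inv_of_lt {w : ℂ} {r : ℝ} (h : |r| < ‖w‖) :
    circleAverage (fun z ↦ (z - w)⁻¹) 0 r = -w⁻¹ := by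
  have hdiff : DifferentiableOn ℂ (fun z : ℂ ↦ (z - w)⁻¹) (closedBall 0 |r|) := by
    refine (differentiableOn_id.sub_const w).inv fun z hz ↦ sub_ne_zero.2 ?_
    rintro rfl
    exact (mem_closedBall_zero_iff.1 hz).not_gt h
  rw [(hdiff.mono closure_ball_subset_closedBall).diffContOnCl.circleAverage, zero_sub, inv_neg]

theorem circleAverage_sub_inv_of_gt {w : ℂ} {r : ℝ} (hw : w ≠ 0) (h : ‖w‖ < |r|) :
    circleAverage (fun z ↦ (z - w)⁻¹) 0 r = 0 := by
  have hmean : circleAverage (fun z ↦ ((z - 0) / (z - w)) • (1 : ℂ)) 0 r = 1 :=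
    diffContOnCl_const.circleAverage_smul_div (mem_ball_zero_iff.2 h)
  have hsplit : EqOn (fun z ↦ ((z - 0) / (z - w)) • (1 : ℂ))
      (fun z ↦ 1 + w • (z - w)⁻¹) (sphere 0 |r|) := by
    intro z hz
    have : z - w ≠ 0 := sub_ne_zero.2 (by rintro rfl; simp_all)
    simp only [sub_zero, smul_eq_mul, mul_one]
    field_simp
    ring
  have hint : CircleIntegrable (fun z ↦ (z - w)⁻¹) 0 r :=
    circleIntegrable_sub_inv_iff.2 (Or.inr (by simp [h.ne]))
  rw [circleAverage_congr_sphere hsplit,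
    circleAverage_fun_add (f₂ := fun z ↦ w • (z - w)⁻¹) (circleIntegrable_const 1 0 r)
      (hint.const_smul (a := w)), circleAverage_const, circleAverage_fun_smul] at hmean
  simpa [hw] using hmean

theorem circleAverage_comp_norm_mul (φ : ℝ → ℂ) (h : ℂ → ℂ) (r : ℝ) :
    circleAverage (fun z ↦ φ ‖z‖ * h z) 0 r = φ |r| * circleAverage h 0 r := by
  rw [← smul_eq_mul, ← circleAverage_fun_smul]
  refine circleAverage_congr_sphere fun z hz ↦ ?_
  rw [mem_sphere_zero_iff_norm.1 hz, smul_eq_mul]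

theorem circleAverage_comp_norm_div_sub (g : ℝ → ℂ) {w : ℂ} (hw : w ≠ 0) {r : ℝ}
    (hr : 0 ≤ r) (hrw : r ≠ ‖w‖) :
    circleAverage (fun z ↦ g ‖z‖ / (z - w)) 0 r = if r < ‖w‖ then -(g r / w) else 0 := by
  simp only [div_eq_mul_inv]
  rw [circleAverage_comp_norm_mul, abs_of_nonneg hr]
  split_ifs with hlt
  · rw [circleAverage_sub_inv_of_lt (by rwa [abs_of_nonneg hr]), mul_neg]
  · have hgt : ‖w‖ < |r| := by rw [abs_of_nonneg hr]; exact (not_lt.1 hlt).lt_of_ne hrw.symm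
    rw [circleAverage_sub_inv_of_gt hw hgt, mul_zero]

theorem integrableOn_ball_comp_norm_div_sub {g : ℝ → ℂ} {R : ℝ}
    (hg : ContinuousOn g (Icc 0 R)) (w : ℂ) :
    IntegrableOn (fun z ↦ g ‖z‖ / (z - w)) (ball 0 R) := by
  obtain ⟨M, hM⟩ := isCompact_Icc.exists_bound_of_continuousOn hg
  have hnorm : MapsTo (‖·‖) (ball (0 : ℂ) R) (Icc 0 R) :=
    fun z hz ↦ ⟨norm_nonneg z, (mem_ball_zero_iff.1 hz).le⟩
  have hkernel : IntegrableOn (fun z : ℂ ↦ ‖z - w‖⁻¹) (ball 0 R) :=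
    (integrableOn_inv_norm_sub_ball (by simp) w (R + ‖w‖)).mono_set
      (ball_subset_ball' (by simp [dist_comm]))
  refine (hkernel.const_mul M).mono' ?_ ?_
  · simp only [div_eq_mul_inv]
    exact ((hg.comp continuous_norm.continuousOn hnorm).aestronglyMeasurable
      measurableSet_ball).mul (measurable_id.sub_const w).inv.aestronglyMeasurable
  · filter_upwards [ae_restrict_mem measurableSet_ball] with z hz
    rw [norm_div, div_eq_mul_inv]
    exact mul_le_mul_of_nonneg_right (hM _ (hnorm hz)) (inv_nonneg.2 (norm_nonneg _))

theorem stmt17 (g : ℝ → ℂ) (hg : ContinuousOn g (Set.Icc (0:ℝ) 1))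
    (w : ℂ) (hw : w ∈ Metric.ball (0:ℂ) 1) (hw0 : w ≠ 0) :
    -(1 / (π : ℂ)) * ∫ z in Metric.ball (0:ℂ) 1, g ‖z‖ / (z - w)
      = (2 / w) * ∫ r in (0:ℝ)..‖w‖, g r * (r : ℂ) := by
  have hradial : ∀ᵐ r : ℝ, r ∈ uIoc 0 1 →
      (2 * π * r) • circleAverage (fun z ↦ g ‖z‖ / (z - w)) 0 r
        = {x | x ≤ ‖w‖}.indicator (fun r ↦ -(2 * π / w) * (g r * r)) r := by
    filter_upwards [Measure.ae_ne volume ‖w‖] with r hrw hr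
    have hr₀ : 0 ≤ r := (uIoc_of_le (zero_le_one (α := ℝ)) ▸ hr).1.le
    rw [circleAverage_comp_norm_div_sub g hw0 hr₀ hrw]
    by_cases hlt : r < ‖w‖
    · rw [if_pos hlt, indicator_of_mem (show r ∈ {x | x ≤ ‖w‖} from hlt.le),
        Complex.real_smul]
      push_cast
      ring
    · rw [if_neg hlt, smul_zero, indicator_of_notMem
        (show r ∉ {x | x ≤ ‖w‖} from fun h ↦ hlt (lt_of_le_of_ne h hrw))]
  rw [setIntegral_ball_eq_intervalIntegral_mul_circleAverage zero_le_one
      (integrableOn_ball_comp_norm_div_sub hg w),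
    intervalIntegral.integral_congr_ae hradial,
    intervalIntegral.integral_indicator ⟨norm_nonneg w, (mem_ball_zero_iff.1 hw).le⟩,
    intervalIntegral.integral_const_mul]
  field_simp
end

section
/- Let 0 < α < 1 and set m = ⌊1/α⌋ + 1. Then the analytic function f(z) = Σ_{n=1}^∞ z^{n^{4m+1}} / n^{2mα} is bounded on the open unit disk 𝔻 (indeed |f(z)| ≤ Σ_{n=1}^∞ n^{−2mα} < ∞), but f does not belong to the weighted Dirichlet space D_α; that is, Σ_{n=1}^∞ (n^{4m+1} + 1)^α n^{−4mα} = ∞. Consequently f ∈ H^∞(𝔻) but f ∉ D_α. -/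
/-!
The coefficients `n ^ (-2mα)` are summable because `2mα > 2 > 1`, so the gap series converges
absolutely and uniformly on the closed disk, giving a holomorphic function bounded by the sum of
the coefficients. In the `D_α` norm, however, the coefficient of index `n ^ (4m+1)` is weighted by
`(n ^ (4m+1) + 1) ^ α ≥ n ^ (4mα)`, which cancels the squared coefficient `n ^ (-4mα)`: the terms of
the norm series are at least `1`.
-/

open MeasureTheory Real

lemma one_lt_natFloor_inv_add_one_mul {α : ℝ} (hα : 0 < α) : 1 < ((⌊1 / α⌋₊ + 1 : ℕ) : ℝ) * α := by
  have h : 1 / α < ((⌊1 / α⌋₊ + 1 : ℕ) : ℝ) := by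
    push_cast
    exact Nat.lt_floor_add_one (1 / α)
  simpa [hα.ne'] using mul_lt_mul_of_pos_right h hα

lemma summable_inv_natCast_add_one_rpow {p : ℝ} (hp : 1 < p) :
    Summable fun n : ℕ => (((n : ℝ) + 1) ^ p)⁻¹ :=
  ((summable_nat_add_iff 1).mpr (Real.summable_nat_rpow_inv.mpr hp)).congr fun n => by
    push_cast; rfl

lemma not_summable_of_one_le {f : ℕ → ℝ} (hf : ∀ n, 1 ≤ f n) : ¬ Summable f := fun hs =>
  absurd (le_of_tendsto_of_tendsto' tendsto_const_nhds hs.tendsto_atTop_zero hf) (by norm_num)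

section GapSeries

variable {b : ℕ → ℝ} (k : ℕ → ℕ)

lemma norm_pow_div_ofReal_le_inv {z : ℂ} (hz : ‖z‖ ≤ 1) {c : ℝ} (hc : 0 ≤ c) (n : ℕ) :
    ‖z ^ n / (c : ℂ)‖ ≤ c⁻¹ := by
  rw [norm_div, Complex.norm_real, Real.norm_of_nonneg hc, norm_pow, div_eq_mul_inv]
  exact mul_le_of_le_one_left (inv_nonneg.mpr hc) (pow_le_one₀ (norm_nonneg z) hz)

lemma differentiableOn_tsum_pow_div (hb0 : ∀ n, 0 ≤ b n) (hb : Summable fun n => (b n)⁻¹) :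
    DifferentiableOn ℂ (fun z => ∑' n, z ^ k n / (b n : ℂ)) (Metric.ball 0 1) :=
  Complex.differentiableOn_tsum_of_summable_norm hb
    (fun n => (differentiable_pow _).differentiableOn.div_const _) Metric.isOpen_ball
    fun n _ hz => norm_pow_div_ofReal_le_inv (by simpa using (mem_ball_zero_iff.mp hz).le) (hb0 n) _

lemma norm_tsum_pow_div_le (hb0 : ∀ n, 0 ≤ b n) (hb : Summable fun n => (b n)⁻¹) {z : ℂ}
    (hz : ‖z‖ ≤ 1) : ‖∑' n, z ^ k n / (b n : ℂ)‖ ≤ ∑' n, (b n)⁻¹ :=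
  tsum_of_norm_bounded hb.hasSum fun n => norm_pow_div_ofReal_le_inv hz (hb0 n) _

end GapSeries

lemma rpow_mul_le_rpow_pow_add_one {x : ℝ} (hx : 1 ≤ x) {α s : ℝ} (hα : 0 ≤ α) {N : ℕ}
    (hs : s ≤ N) : x ^ (s * α) ≤ (x ^ N + 1) ^ α :=
  calc x ^ (s * α) ≤ x ^ ((N : ℝ) * α) := rpow_le_rpow_of_exponent_le hx (by gcongr)
    _ = (x ^ N) ^ α := by rw [rpow_mul (by linarith), rpow_natCast]
    _ ≤ (x ^ N + 1) ^ α := rpow_le_rpow (by positivity) (by linarith) hα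

theorem stmt18_general (α : ℝ) (hα0 : 0 < α)
    (m : ℕ) (hm : m = Nat.floor (1 / α) + 1)
    (f : ℂ → ℂ)
    (hf : f = fun z => ∑' n : ℕ, z ^ ((n + 1) ^ (4 * m + 1)) /
        (((((n : ℝ) + 1) ^ (2 * (m : ℝ) * α) : ℝ)) : ℂ)) :
    Summable (fun n : ℕ => ((((n : ℝ) + 1) ^ (2 * (m : ℝ) * α) : ℝ))⁻¹) ∧
    DifferentiableOn ℂ f (Metric.ball (0:ℂ) 1) ∧
    (∀ z ∈ Metric.ball (0:ℂ) 1,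
      ‖f z‖ ≤ ∑' n : ℕ, ((((n : ℝ) + 1) ^ (2 * (m : ℝ) * α) : ℝ))⁻¹) ∧
    ¬ Summable (fun n : ℕ =>
      ((((n : ℝ) + 1) ^ (4 * m + 1) + 1) ^ α) / (((n : ℝ) + 1) ^ (4 * (m : ℝ) * α))) := by
  have hmα : 1 < (m : ℝ) * α := hm ▸ one_lt_natFloor_inv_add_one_mul hα0
  have hcoeff : Summable fun n : ℕ => (((n : ℝ) + 1) ^ (2 * (m : ℝ) * α))⁻¹ :=
    summable_inv_natCast_add_one_rpow (by linarith)
  have hcoeff0 (n : ℕ) : 0 ≤ ((n : ℝ) + 1) ^ (2 * (m : ℝ) * α) := by positivity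
  subst hf
  refine ⟨hcoeff, differentiableOn_tsum_pow_div _ hcoeff0 hcoeff,
    fun z hz => norm_tsum_pow_div_le _ hcoeff0 hcoeff (mem_ball_zero_iff.mp hz).le,
    not_summable_of_one_le fun n => ?_⟩
  have hx : (1 : ℝ) ≤ n + 1 := by simp
  rw [one_le_div (by positivity)]
  exact rpow_mul_le_rpow_pow_add_one hx hα0.le (by push_cast; linarith)

theorem stmt18 (α : ℝ) (hα0 : 0 < α) (hα1 : α < 1)
    (m : ℕ) (hm : m = Nat.floor (1 / α) + 1)
    (f : ℂ → ℂ)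
    (hf : f = fun z => ∑' n : ℕ, z ^ ((n + 1) ^ (4 * m + 1)) /
        (((((n : ℝ) + 1) ^ (2 * (m : ℝ) * α) : ℝ)) : ℂ)) :
    Summable (fun n : ℕ => ((((n : ℝ) + 1) ^ (2 * (m : ℝ) * α) : ℝ))⁻¹) ∧
    DifferentiableOn ℂ f (Metric.ball (0:ℂ) 1) ∧
    (∀ z ∈ Metric.ball (0:ℂ) 1,
      ‖f z‖ ≤ ∑' n : ℕ, ((((n : ℝ) + 1) ^ (2 * (m : ℝ) * α) : ℝ))⁻¹) ∧
    ¬ Summable (fun n : ℕ =>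
      ((((n : ℝ) + 1) ^ (4 * m + 1) + 1) ^ α) / (((n : ℝ) + 1) ^ (4 * (m : ℝ) * α))) :=
  stmt18_general α hα0 m hm f hf
end
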